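/- arXiv:2402.01101 — 4 statements merged into one kernel-verified Lean document; each statement's English description precedes it below -/
import Mathlib

section
/- (Theorem 3.1(ii), Euclidean model.) Let C > 0 and α ∈ ℝ with C + α - 1 > 0. Assume Δ^D ρ ≥ (C/ρ)·V^{λ-μ} pointwise on ℝⁿ \ ρ^{-1}{0}. Then for every φ ∈ C_c^∞(ℝⁿ \ ρ^{-1}{0}) one has ∫_{ℝⁿ} ρ^α |∇^D φ|² V^{τ+λ-μ} dx ≥ ((α+C-1)/2)² ∫_{ℝⁿ} ρ^{α-2} φ² V^{τ+λ-μ} dx. -/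
open MeasureTheory Real

noncomputable section

/-- Euclidean divergence of a vector field on `ℝⁿ`. -/
def divE {n : ℕ} (X : EuclideanSpace ℝ (Fin n) → EuclideanSpace ℝ (Fin n))
    (x : EuclideanSpace ℝ (Fin n)) : ℝ :=
  ∑ i, fderiv ℝ X x (EuclideanSpace.single i 1) i

/-- Euclidean Laplacian. -/
def lapE {n : ℕ} (f : EuclideanSpace ℝ (Fin n) → ℝ) (x : EuclideanSpace ℝ (Fin n)) : ℝ :=
  divE (fun y => gradient f y) x

/-- `V^s = e^{s·u}`. -/
def Vpow {n : ℕ} (u : EuclideanSpace ℝ (Fin n) → ℝ) (s : ℝ)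
    (x : EuclideanSpace ℝ (Fin n)) : ℝ :=
  Real.exp (s * u x)

/-- Affine gradient `∇^D f = V^{μ-λ} ∇f`. -/
def gradD {n : ℕ} (lam mu : ℝ) (u f : EuclideanSpace ℝ (Fin n) → ℝ)
    (x : EuclideanSpace ℝ (Fin n)) : EuclideanSpace ℝ (Fin n) :=
  Vpow u (mu - lam) x • gradient f x

/-- Affine Laplacian `Δ^D f = V^{μ-λ}(Δf + (2μ + nλ)⟨∇u, ∇f⟩)`. -/
def lapD {n : ℕ} (lam mu : ℝ) (u f : EuclideanSpace ℝ (Fin n) → ℝ)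
    (x : EuclideanSpace ℝ (Fin n)) : ℝ :=
  Vpow u (mu - lam) x *
    (lapE f x + (2 * mu + (n : ℝ) * lam) * (inner ℝ (gradient u x) (gradient f x) : ℝ))

/-! ### Auxiliary lemmas -/

lemma aux_cont {n : ℕ} {S K : Set (EuclideanSpace ℝ (Fin n))} (hS : IsOpen S) (hKc : IsClosed K)
    (hKS : K ⊆ S) {g : EuclideanSpace ℝ (Fin n) → ℝ} (hg : ContinuousOn g S)
    (h0 : ∀ x ∉ K, g x = 0) : Continuous g := by
  rw [continuous_iff_continuousAt]
  intro x
  by_cases hx : x ∈ S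
  · exact hg.continuousAt (hS.mem_nhds hx)
  · have hxK : x ∈ Kᶜ := fun h => hx (hKS h)
    have : g =ᶠ[nhds x] (fun _ => 0) :=
      Filter.eventually_of_mem (hKc.isOpen_compl.mem_nhds hxK) (fun y hy => h0 y hy)
    exact (continuousAt_const (y := (0:ℝ))).congr this.symm

lemma aux_integrable {n : ℕ} {S K : Set (EuclideanSpace ℝ (Fin n))} (hS : IsOpen S)
    (hK : IsCompact K) (hKS : K ⊆ S) {g : EuclideanSpace ℝ (Fin n) → ℝ}
    (hg : ContinuousOn g S) (h0 : ∀ x ∉ K, g x = 0) : Integrable g := by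
  have hc := aux_cont hS hK.isClosed hKS hg h0
  have hsupp : HasCompactSupport g := HasCompactSupport.intro hK h0
  exact hc.integrable_of_hasCompactSupport hsupp

lemma grad_apply {n : ℕ} (f : EuclideanSpace ℝ (Fin n) → ℝ) (x : EuclideanSpace ℝ (Fin n))
    (i : Fin n) :
    gradient f x i = fderiv ℝ f x (EuclideanSpace.single i 1) := by
  have h1 : (inner ℝ (gradient f x) (EuclideanSpace.single i 1) : ℝ)
      = fderiv ℝ f x (EuclideanSpace.single i 1) := by
    rw [gradient, InnerProductSpace.toDual_symm_apply]
  rw [← h1]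
  rw [EuclideanSpace.inner_single_right]; simp

lemma sum_fderiv_mul {n : ℕ} (f h : EuclideanSpace ℝ (Fin n) → ℝ)
    (x : EuclideanSpace ℝ (Fin n)) :
    ∑ i, fderiv ℝ f x (EuclideanSpace.single i 1) * fderiv ℝ h x (EuclideanSpace.single i 1)
      = (inner ℝ (gradient f x) (gradient h x) : ℝ) := by
  rw [PiLp.inner_apply]
  simp [grad_apply, mul_comm]

lemma grad_contDiff {n : ℕ} (f : EuclideanSpace ℝ (Fin n) → ℝ) (hf : ContDiff ℝ (⊤ : ℕ∞) f) :
    ContDiff ℝ (⊤ : ℕ∞) (fun y => gradient f y) := by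
  have hfd : ContDiff ℝ (⊤ : ℕ∞) (fderiv ℝ f) := hf.fderiv_right (by simp)
  exact (InnerProductSpace.toDual ℝ
    (EuclideanSpace ℝ (Fin n))).symm.toContinuousLinearEquiv.contDiff.comp hfd

lemma lapE_eq {n : ℕ} (f : EuclideanSpace ℝ (Fin n) → ℝ) (hf : ContDiff ℝ (⊤ : ℕ∞) f)
    (x : EuclideanSpace ℝ (Fin n)) :
    lapE f x = ∑ i, fderiv ℝ (fun y => fderiv ℝ f y (EuclideanSpace.single i 1)) x
      (EuclideanSpace.single i 1) := by
  unfold lapE divE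
  refine Finset.sum_congr rfl (fun i _ => ?_)
  have hdG : DifferentiableAt ℝ (fun y => gradient f y) x :=
    ((grad_contDiff f hf).differentiable (by simp)) x
  have key : fderiv ℝ (fun y => gradient f y) x (EuclideanSpace.single i 1) i
      = fderiv ℝ (fun y => gradient f y i) x (EuclideanSpace.single i 1) := by
    have h := ((EuclideanSpace.proj i :
      EuclideanSpace ℝ (Fin n) →L[ℝ] ℝ).hasFDerivAt.comp x hdG.hasFDerivAt).fderiv
    have h2 : (fun y => gradient f y i) =
        (EuclideanSpace.proj i : EuclideanSpace ℝ (Fin n) →L[ℝ] ℝ) ∘ (fun y => gradient f y) := by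
      funext y; rfl
    rw [h2, h]; rfl
  rw [key]
  have h3 : (fun y => gradient f y i)
      = (fun y => fderiv ℝ f y (EuclideanSpace.single i 1)) :=
    funext fun y => grad_apply f y i
  rw [h3]

def Pf {n : ℕ} (u ρ φ : EuclideanSpace ℝ (Fin n) → ℝ) (α s : ℝ) :
    EuclideanSpace ℝ (Fin n) → ℝ :=
  fun y => ρ y ^ (α - 1) * φ y ^ 2 * Real.exp (s * u y)

def Ff {n : ℕ} (u ρ φ : EuclideanSpace ℝ (Fin n) → ℝ) (α s : ℝ) (i : Fin n) :
    EuclideanSpace ℝ (Fin n) → ℝ :=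
  fun y => Pf u ρ φ α s y * fderiv ℝ ρ y (EuclideanSpace.single i 1)

def Psi {n : ℕ} (u ρ φ : EuclideanSpace ℝ (Fin n) → ℝ) (α s : ℝ) (i : Fin n)
    (x : EuclideanSpace ℝ (Fin n)) : EuclideanSpace ℝ (Fin n) →L[ℝ] ℝ :=
  Pf u ρ φ α s x • fderiv ℝ (fun y => fderiv ℝ ρ y (EuclideanSpace.single i 1)) x
    + fderiv ℝ ρ x (EuclideanSpace.single i 1) •
      ((φ x ^ 2 * Real.exp (s * u x) * ((α - 1) * ρ x ^ (α - 2))) • fderiv ℝ ρ x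
        + (ρ x ^ (α - 1) * Real.exp (s * u x) * (2 * φ x)) • fderiv ℝ φ x
        + (ρ x ^ (α - 1) * φ x ^ 2 * Real.exp (s * u x) * s) • fderiv ℝ u x)

lemma psi_apply {n : ℕ} (u ρ φ : EuclideanSpace ℝ (Fin n) → ℝ) (α s : ℝ) (i : Fin n)
    (x : EuclideanSpace ℝ (Fin n)) :
    Psi u ρ φ α s i x (EuclideanSpace.single i 1) =
      Pf u ρ φ α s x *
        fderiv ℝ (fun y => fderiv ℝ ρ y (EuclideanSpace.single i 1)) x (EuclideanSpace.single i 1)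
      + (φ x ^ 2 * Real.exp (s * u x) * ((α - 1) * ρ x ^ (α - 2))) *
          (fderiv ℝ ρ x (EuclideanSpace.single i 1) * fderiv ℝ ρ x (EuclideanSpace.single i 1))
      + (ρ x ^ (α - 1) * Real.exp (s * u x) * (2 * φ x)) *
          (fderiv ℝ φ x (EuclideanSpace.single i 1) * fderiv ℝ ρ x (EuclideanSpace.single i 1))
      + (ρ x ^ (α - 1) * φ x ^ 2 * Real.exp (s * u x) * s) *
          (fderiv ℝ u x (EuclideanSpace.single i 1) * fderiv ℝ ρ x (EuclideanSpace.single i 1)) := by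
  simp only [Psi, ContinuousLinearMap.add_apply, ContinuousLinearMap.coe_smul', Pi.smul_apply,
    smul_eq_mul]
  ring

lemma hasFDerivAt_Pf {n : ℕ} {u ρ φ : EuclideanSpace ℝ (Fin n) → ℝ} (hu : ContDiff ℝ (⊤ : ℕ∞) u)
    (hρ : ContDiff ℝ (⊤ : ℕ∞) ρ) (hφ : ContDiff ℝ (⊤ : ℕ∞) φ) (α s : ℝ) {x : EuclideanSpace ℝ (Fin n)}
    (hx : ρ x ≠ 0) :
    HasFDerivAt (Pf u ρ φ α s)
      ((φ x ^ 2 * Real.exp (s * u x) * ((α - 1) * ρ x ^ (α - 2))) • fderiv ℝ ρ x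
        + (ρ x ^ (α - 1) * Real.exp (s * u x) * (2 * φ x)) • fderiv ℝ φ x
        + (ρ x ^ (α - 1) * φ x ^ 2 * Real.exp (s * u x) * s) • fderiv ℝ u x) x := by
  have h1 : HasFDerivAt (fun y => ρ y ^ (α - 1))
      (((α - 1) * ρ x ^ (α - 1 - 1)) • fderiv ℝ ρ x) x :=
    ((hρ.differentiable (by simp) x).hasFDerivAt).rpow_const (Or.inl hx)
  have hφd := (hφ.differentiable (by simp) x).hasFDerivAt
  have h2 : HasFDerivAt (fun y => φ y ^ 2)
      (φ x • fderiv ℝ φ x + φ x • fderiv ℝ φ x) x := by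
    have := hφd.mul hφd
    have he : (φ * φ) = fun y => φ y ^ 2 := by funext y; simp [sq]
    rwa [he] at this
  have h3 : HasFDerivAt (fun y => Real.exp (s * u y))
      (Real.exp (s * u x) • (s • fderiv ℝ u x)) x :=
    (((hu.differentiable (by simp) x).hasFDerivAt).const_mul s).exp
  have h := (h1.mul h2).mul h3
  have hα : α - 1 - 1 = α - 2 := by ring
  rw [hα] at h
  refine h.congr_fderiv ?_
  ext v
  simp only [ContinuousLinearMap.add_apply, ContinuousLinearMap.coe_smul', Pi.smul_apply,
    smul_eq_mul, Pi.mul_apply]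
  ring

lemma hasFDerivAt_Ff {n : ℕ} {u ρ φ : EuclideanSpace ℝ (Fin n) → ℝ} (hu : ContDiff ℝ (⊤ : ℕ∞) u)
    (hρ : ContDiff ℝ (⊤ : ℕ∞) ρ) (hφ : ContDiff ℝ (⊤ : ℕ∞) φ) (α s : ℝ) (i : Fin n)
    {x : EuclideanSpace ℝ (Fin n)} (hx : ρ x ≠ 0) :
    HasFDerivAt (Ff u ρ φ α s i) (Psi u ρ φ α s i x) x := by
  have hD : HasFDerivAt (fun y => fderiv ℝ ρ y (EuclideanSpace.single i 1))
      (fderiv ℝ (fun y => fderiv ℝ ρ y (EuclideanSpace.single i 1)) x) x := by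
    have : ContDiff ℝ (⊤ : ℕ∞) (fun y => fderiv ℝ ρ y (EuclideanSpace.single i 1)) :=
      (hρ.fderiv_right (by simp)).clm_apply contDiff_const
    exact ((this.differentiable (by simp)) x).hasFDerivAt
  exact (hasFDerivAt_Pf hu hρ hφ α s hx).mul hD

lemma sum_Psi {n : ℕ} {u ρ φ : EuclideanSpace ℝ (Fin n) → ℝ} (hρ : ContDiff ℝ (⊤ : ℕ∞) ρ) (α s : ℝ)
    (x : EuclideanSpace ℝ (Fin n)) :
    ∑ i, Psi u ρ φ α s i x (EuclideanSpace.single i 1) =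
      (α - 1) * ρ x ^ (α - 2) * φ x ^ 2 * Real.exp (s * u x) * ‖gradient ρ x‖ ^ 2
      + 2 * ρ x ^ (α - 1) * φ x * Real.exp (s * u x) *
          (inner ℝ (gradient φ x) (gradient ρ x) : ℝ)
      + ρ x ^ (α - 1) * φ x ^ 2 * Real.exp (s * u x) *
          (lapE ρ x + s * (inner ℝ (gradient u x) (gradient ρ x) : ℝ)) := by
  rw [Finset.sum_congr rfl (fun i _ => psi_apply u ρ φ α s i x)]
  rw [Finset.sum_add_distrib, Finset.sum_add_distrib, Finset.sum_add_distrib,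
    ← Finset.mul_sum, ← Finset.mul_sum, ← Finset.mul_sum, ← Finset.mul_sum]
  rw [sum_fderiv_mul ρ ρ, sum_fderiv_mul φ ρ, sum_fderiv_mul u ρ, ← lapE_eq ρ hρ]
  rw [← real_inner_self_eq_norm_sq]
  simp only [Pf]
  ring

lemma integral_fderiv_apply_zero {n : ℕ} {F : EuclideanSpace ℝ (Fin n) → ℝ}
    {v : EuclideanSpace ℝ (Fin n)} (hF : Differentiable ℝ F) (hFi : Integrable F)
    (hF' : Integrable (fun x => fderiv ℝ F x v)) :
    ∫ x, fderiv ℝ F x v = 0 := by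
  have h := integral_mul_fderiv_eq_neg_fderiv_mul_of_integrable
    (μ := (volume : Measure (EuclideanSpace ℝ (Fin n))))
    (f := fun _ => (1 : ℝ)) (g := F) (v := v) ?_ ?_ ?_ (fun x _ => differentiableAt_const (1:ℝ)) (fun x _ => hF x)
  · simpa [fderiv_fun_const] using h
  · simp [fderiv_fun_const]
  · simpa using hF'
  · simpa using hFi

set_option maxHeartbeats 1000000 in
theorem stmt1 {n : ℕ} (hn : 1 ≤ n) (lam mu : ℝ)
    (u : EuclideanSpace ℝ (Fin n) → ℝ) (hu : ContDiff ℝ (⊤ : ℕ∞) u)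
    (τ : ℝ) (hτ : τ = ((n : ℝ) + 1) * lam + mu)
    (ρ : EuclideanSpace ℝ (Fin n) → ℝ) (hρsm : ContDiff ℝ (⊤ : ℕ∞) ρ)
    (hρ0 : ∀ x, 0 ≤ ρ x)
    (hρg : ∀ x, ρ x ≠ 0 → ‖gradD lam mu u ρ x‖ = 1)
    (C α : ℝ) (hC : 0 < C) (hα : 0 < C + α - 1)
    (hΔ : ∀ x, ρ x ≠ 0 → (C / ρ x) * Vpow u (lam - mu) x ≤ lapD lam mu u ρ x)
    (φ : EuclideanSpace ℝ (Fin n) → ℝ) (hφ : ContDiff ℝ (⊤ : ℕ∞) φ)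
    (hφc : HasCompactSupport φ) (hφs : tsupport φ ⊆ {x | ρ x ≠ 0}) :
    ∫ x, ρ x ^ α * ‖gradD lam mu u φ x‖ ^ 2 * Vpow u (τ + lam - mu) x ≥
      ((α + C - 1) / 2) ^ 2 *
        ∫ x, ρ x ^ (α - 2) * φ x ^ 2 * Vpow u (τ + lam - mu) x := by
  classical
  set c : ℝ := α + C - 1 with hc_def
  have hc : 0 < c := by rw [hc_def]; exact by linarith [hα]
  set s : ℝ := 2 * mu + (n : ℝ) * lam with hs_def
  set t : ℝ := τ + lam - mu with ht_def
  have hts : t = (lam - mu) + (lam - mu) + s := by rw [ht_def, hτ, hs_def]; ring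
  set S : Set (EuclideanSpace ℝ (Fin n)) := {x | ρ x ≠ 0} with hS_def
  have hS : IsOpen S := by
    have : S = ρ ⁻¹' ({(0:ℝ)}ᶜ) := rfl
    rw [this]
    exact isOpen_compl_singleton.preimage hρsm.continuous
  have hK : IsCompact (tsupport φ) := hφc
  have hKS : tsupport φ ⊆ S := hφs
  have hρpos : ∀ x ∈ S, 0 < ρ x := fun x hx => lt_of_le_of_ne (hρ0 x) (Ne.symm hx)
  have hφz : ∀ x ∉ tsupport φ, φ x = 0 := fun x hx => image_eq_zero_of_notMem_tsupport hx
  have hφev : ∀ x ∉ tsupport φ, ∀ᶠ y in nhds x, φ y = 0 := fun x hx =>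
    Filter.eventually_of_mem (hK.isClosed.isOpen_compl.mem_nhds hx) (fun y hy => hφz y hy)
  have hgradφz : ∀ x ∉ tsupport φ, gradient φ x = 0 := by
    intro x hx
    have h1 : fderiv ℝ φ x = fderiv ℝ (fun _ => (0:ℝ)) x :=
      Filter.EventuallyEq.fderiv_eq (hφev x hx)
    rw [gradient, h1, fderiv_fun_const]
    simp
  -- Vpow basics
  have hVpos : ∀ (a : ℝ) x, 0 < Vpow u a x := fun a x => Real.exp_pos _
  have hVmul : ∀ (a b : ℝ) x, Vpow u a x * Vpow u b x = Vpow u (a + b) x := by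
    intro a b x
    rw [Vpow, Vpow, Vpow, ← Real.exp_add]
    congr 1; ring
  have hVcont : ∀ a : ℝ, Continuous (Vpow u a) := fun a =>
    Real.continuous_exp.comp (continuous_const.mul hu.continuous)
  have hone : ∀ x, Vpow u (lam - mu) x * Vpow u (mu - lam) x = 1 := by
    intro x; rw [hVmul]; simp [Vpow]
  have hgρ : ∀ x ∈ S, ‖gradient ρ x‖ = Vpow u (lam - mu) x := by
    intro x hx
    have h := hρg x hx
    rw [gradD, norm_smul, Real.norm_eq_abs, abs_of_pos (hVpos _ x)] at h
    have h1 : Vpow u (lam - mu) x * (Vpow u (mu - lam) x * ‖gradient ρ x‖)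
        = Vpow u (lam - mu) x * 1 := by rw [h]
    rw [← mul_assoc, hone x, one_mul, mul_one] at h1
    exact h1
  have hgradDφ : ∀ x, ‖gradD lam mu u φ x‖ = Vpow u (mu - lam) x * ‖gradient φ x‖ := by
    intro x
    rw [gradD, norm_smul, Real.norm_eq_abs, abs_of_pos (hVpos _ _)]
  -- continuity helpers
  have hfc : ∀ (f : EuclideanSpace ℝ (Fin n) → ℝ), ContDiff ℝ (⊤ : ℕ∞) f →
      ∀ v, Continuous fun x => fderiv ℝ f x v := by
    intro f hf v
    have h1 : ContDiff ℝ (⊤ : ℕ∞) (fderiv ℝ f) := hf.fderiv_right (by simp)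
    exact h1.continuous.clm_apply continuous_const
  have hfc2 : ∀ (f : EuclideanSpace ℝ (Fin n) → ℝ), ContDiff ℝ (⊤ : ℕ∞) f →
      ∀ v, Continuous fun x => fderiv ℝ (fun y => fderiv ℝ f y v) x v := by
    intro f hf v
    have h1 : ContDiff ℝ (⊤ : ℕ∞) (fderiv ℝ f) := hf.fderiv_right (by simp)
    exact hfc _ (h1.clm_apply contDiff_const) v
  have hrpowc : ∀ β : ℝ, ContinuousOn (fun x => ρ x ^ β) S := fun β =>
    (hρsm.continuous.continuousOn).rpow_const (fun x hx => Or.inl hx)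
  have hexpc : Continuous (fun x => Real.exp (s * u x)) :=
    Real.continuous_exp.comp (continuous_const.mul hu.continuous)
  have cPf : ContinuousOn (Pf u ρ φ α s) S :=
    ((hrpowc (α - 1)).mul ((hφ.continuous.pow 2).continuousOn)).mul hexpc.continuousOn
  -- integrands
  set If : EuclideanSpace ℝ (Fin n) → ℝ := fun x => ρ x ^ (α - 2) * φ x ^ 2 * Vpow u t x
    with hIf_def
  set Jf : EuclideanSpace ℝ (Fin n) → ℝ :=
    fun x => ρ x ^ α * ‖gradD lam mu u φ x‖ ^ 2 * Vpow u t x with hJf_def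
  have hIfint : Integrable If := by
    apply aux_integrable hS hK hKS
    · exact ((hrpowc (α - 2)).mul ((hφ.continuous.pow 2).continuousOn)).mul
        (hVcont t).continuousOn
    · intro x hx; simp [hIf_def, hφz x hx]
  have hJfint : Integrable Jf := by
    apply aux_integrable hS hK hKS
    · refine ((hrpowc α).mul ?_).mul (hVcont t).continuousOn
      have : Continuous fun x => ‖gradD lam mu u φ x‖ ^ 2 := by
        apply Continuous.pow
        apply Continuous.norm
        exact ((hVcont (mu - lam)).smul (grad_contDiff φ hφ).continuous)
      exact this.continuousOn
    · intro x hx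
      simp [hJf_def, hgradDφ x, hgradφz x hx]
  -- the vector field and its derivative
  have hFev : ∀ (i : Fin n), ∀ x ∉ tsupport φ, Ff u ρ φ α s i =ᶠ[nhds x] fun _ => 0 := by
    intro i x hx
    filter_upwards [hφev x hx] with y hy
    simp [Ff, Pf, hy]
  have hFdiff : ∀ i, Differentiable ℝ (Ff u ρ φ α s i) := by
    intro i x
    by_cases hx : ρ x ≠ 0
    · exact (hasFDerivAt_Ff hu hρsm hφ α s i hx).differentiableAt
    · push_neg at hx
      have hxK : x ∉ tsupport φ := fun h => (hφs h) hx
      exact ((differentiableAt_const (0:ℝ)).congr_of_eventuallyEq (hFev i x hxK))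
  have hFfderiv0 : ∀ (i : Fin n) x, x ∉ tsupport φ → fderiv ℝ (Ff u ρ φ α s i) x = 0 := by
    intro i x hx
    rw [Filter.EventuallyEq.fderiv_eq (hFev i x hx), fderiv_fun_const]
    rfl
  have hFfderivS : ∀ (i : Fin n) x, ρ x ≠ 0 →
      fderiv ℝ (Ff u ρ φ α s i) x = Psi u ρ φ α s i x := fun i x hx =>
    (hasFDerivAt_Ff hu hρsm hφ α s i hx).fderiv
  have hFint : ∀ i, Integrable (Ff u ρ φ α s i) := by
    intro i
    apply aux_integrable hS hK hKS (cPf.mul (hfc ρ hρsm _).continuousOn)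
    intro x hx; simp [Ff, Pf, hφz x hx]
  have qint : ∀ i : Fin n,
      Integrable (fun x => fderiv ℝ (Ff u ρ φ α s i) x (EuclideanSpace.single i 1)) := by
    intro i
    apply aux_integrable hS hK hKS
    · have cQ : ContinuousOn (fun x => Psi u ρ φ α s i x (EuclideanSpace.single i 1)) S := by
        have e1 : ∀ x, Psi u ρ φ α s i x (EuclideanSpace.single i 1) =
            Pf u ρ φ α s x * fderiv ℝ (fun y => fderiv ℝ ρ y (EuclideanSpace.single i 1)) x
              (EuclideanSpace.single i 1)
            + (φ x ^ 2 * Real.exp (s * u x) * ((α - 1) * ρ x ^ (α - 2))) *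
                (fderiv ℝ ρ x (EuclideanSpace.single i 1) *
                  fderiv ℝ ρ x (EuclideanSpace.single i 1))
            + (ρ x ^ (α - 1) * Real.exp (s * u x) * (2 * φ x)) *
                (fderiv ℝ φ x (EuclideanSpace.single i 1) *
                  fderiv ℝ ρ x (EuclideanSpace.single i 1))
            + (ρ x ^ (α - 1) * φ x ^ 2 * Real.exp (s * u x) * s) *
                (fderiv ℝ u x (EuclideanSpace.single i 1) *
                  fderiv ℝ ρ x (EuclideanSpace.single i 1)) := psi_apply u ρ φ α s i
        rw [funext e1]
        have cdρ := (hfc ρ hρsm (EuclideanSpace.single i 1)).continuousOn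
          (s := S)
        have cdφ := (hfc φ hφ (EuclideanSpace.single i 1)).continuousOn (s := S)
        have cdu := (hfc u hu (EuclideanSpace.single i 1)).continuousOn (s := S)
        have cH := (hfc2 ρ hρsm (EuclideanSpace.single i 1)).continuousOn (s := S)
        have cφ2 := (hφ.continuous.pow 2).continuousOn (s := S)
        have cφ := hφ.continuous.continuousOn (s := S)
        have cexp := hexpc.continuousOn (s := S)
        exact (((cPf.mul cH).add
          (((cφ2.mul cexp).mul (continuousOn_const.mul (hrpowc (α-2)))).mul (cdρ.mul cdρ))).add
          ((((hrpowc (α-1)).mul cexp).mul (continuousOn_const.mul cφ)).mul (cdφ.mul cdρ))).add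
          (((((hrpowc (α-1)).mul cφ2).mul cexp).mul continuousOn_const).mul (cdu.mul cdρ))
      exact cQ.congr (fun x hx => by rw [hFfderivS i x hx])
    · intro x hx
      rw [hFfderiv0 i x hx]
      rfl
  -- divergence integral vanishes
  set Gf : EuclideanSpace ℝ (Fin n) → ℝ :=
    fun x => ∑ i, fderiv ℝ (Ff u ρ φ α s i) x (EuclideanSpace.single i 1) with hGf_def
  have hGint : Integrable Gf := integrable_finset_sum _ (fun i _ => qint i)
  have hGzero : ∫ x, Gf x = 0 := by
    rw [hGf_def]
    rw [integral_finset_sum _ (fun i _ => qint i)]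
    exact Finset.sum_eq_zero fun i _ =>
      integral_fderiv_apply_zero (hFdiff i) (hFint i) (qint i)
  -- pointwise inequality
  have hkey : ∀ x, c / 2 * If x - 2 / c * Jf x ≤ Gf x := by
    intro x
    by_cases hx : ρ x ≠ 0
    · -- main computation
      have hr : 0 < ρ x := hρpos x hx
      have hGx : Gf x =
          (α - 1) * ρ x ^ (α - 2) * φ x ^ 2 * Real.exp (s * u x) * ‖gradient ρ x‖ ^ 2
          + 2 * ρ x ^ (α - 1) * φ x * Real.exp (s * u x) *
              (inner ℝ (gradient φ x) (gradient ρ x) : ℝ)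
          + ρ x ^ (α - 1) * φ x ^ 2 * Real.exp (s * u x) *
              (lapE ρ x + s * (inner ℝ (gradient u x) (gradient ρ x) : ℝ)) := by
        rw [show Gf x = ∑ i, fderiv ℝ (Ff u ρ φ α s i) x (EuclideanSpace.single i 1) from rfl]
        rw [Finset.sum_congr rfl (fun i _ => by rw [hFfderivS i x hx])]
        exact sum_Psi hρsm α s x
      -- notations
      set r : ℝ := ρ x
      set A : ℝ := φ x
      set Z : ℝ := ‖gradient φ x‖
      set W : ℝ := Real.exp (s * u x) with hW_def
      set Vlm : ℝ := Vpow u (lam - mu) x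
      set Vml : ℝ := Vpow u (mu - lam) x
      set Vt : ℝ := Vpow u t x
      have hWV : W = Vpow u s x := rfl
      have hVlm : 0 < Vlm := hVpos _ x
      have hVml : 0 < Vml := hVpos _ x
      have hVt : 0 < Vt := hVpos _ x
      have hW : 0 < W := Real.exp_pos _
      have eVt : Vlm * Vlm * W = Vt := by
        rw [hWV]; rw [hVmul, hVmul]; congr 1; rw [hts]
      have eVt2 : W * Vlm = Vt * Vml := by
        have a1 : W * Vlm = Vpow u (s + (lam - mu)) x := hVmul s (lam - mu) x
        have a2 : Vt * Vml = Vpow u (t + (mu - lam)) x := hVmul t (mu - lam) x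
        rw [a1, a2]
        congr 1
        rw [hts]; ring
      have hgρx : ‖gradient ρ x‖ = Vlm := hgρ x hx
      -- rpow facts
      have hr1 : r ^ (α - 1) = r ^ (α - 2) * r := by
        rw [show α - 1 = (α - 2) + 1 by ring, Real.rpow_add_one hr.ne']
      have hr2 : r ^ α = r ^ (α - 2) * r ^ (2 : ℕ) := by
        rw [← Real.rpow_natCast r 2, ← Real.rpow_add hr]
        congr 1
        push_cast; ring
      have hR2 : 0 ≤ r ^ (α - 2) := Real.rpow_nonneg hr.le _
      -- lapD bound
      have e2 : C / r * (Vlm * Vlm) ≤ lapE ρ x + s *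
          (inner ℝ (gradient u x) (gradient ρ x) : ℝ) := by
        have h := hΔ x hx
        rw [lapD] at h
        have h2 := mul_le_mul_of_nonneg_left h hVlm.le
        calc C / r * (Vlm * Vlm) = Vlm * (C / r * Vlm) := by ring
          _ ≤ Vlm * (Vml * (lapE ρ x + (2 * mu + (n:ℝ) * lam) *
              (inner ℝ (gradient u x) (gradient ρ x) : ℝ))) := h2
          _ = (Vlm * Vml) * (lapE ρ x + s *
              (inner ℝ (gradient u x) (gradient ρ x) : ℝ)) := by rw [hs_def]; ring
          _ = _ := by rw [hone x, one_mul]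
      -- inner product bound
      have e3 : |(inner ℝ (gradient φ x) (gradient ρ x) : ℝ)| ≤ Z * Vlm := by
        rw [← hgρx]
        exact abs_real_inner_le_norm _ _
      -- gradD φ norm
      have e4 : ‖gradD lam mu u φ x‖ = Vml * Z := hgradDφ x
      -- If and Jf values
      have hIfx : If x = r ^ (α - 2) * A ^ 2 * Vt := rfl
      have hJfx : Jf x = r ^ (α - 2) * r ^ (2:ℕ) * (Vml * Z) ^ 2 * Vt := by
        rw [show Jf x = r ^ α * ‖gradD lam mu u φ x‖ ^ 2 * Vt from rfl, e4, hr2]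
      -- assemble
      set q : ℝ := r * (Vml * Z) with hq_def
      have hZ : 0 ≤ Z := norm_nonneg _
      have hq : 0 ≤ q := by positivity
      -- bound on middle term
      have m3 : -(2 * (r ^ (α - 2) * Vt) * (|A| * q)) ≤
          2 * r ^ (α - 1) * A * W * (inner ℝ (gradient φ x) (gradient ρ x) : ℝ) := by
        have habs : |2 * r ^ (α - 1) * A * W *
            (inner ℝ (gradient φ x) (gradient ρ x) : ℝ)| ≤ 2 * (r ^ (α - 2) * Vt) * (|A| * q) := by
          rw [abs_mul]
          have h1 : |2 * r ^ (α - 1) * A * W| = 2 * r ^ (α - 1) * |A| * W := by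
            rw [abs_mul, abs_mul, abs_of_pos hW, abs_of_nonneg (by positivity : 0 ≤ 2 * r ^ (α-1))]
          rw [h1]
          have h2 : 2 * r ^ (α - 1) * |A| * W * |(inner ℝ (gradient φ x) (gradient ρ x) : ℝ)| ≤
              2 * r ^ (α - 1) * |A| * W * (Z * Vlm) := by
            apply mul_le_mul_of_nonneg_left e3 (by positivity)
          refine h2.trans (le_of_eq ?_)
          rw [hr1, hq_def]
          linear_combination (2 * r ^ (α - 2) * r * |A| * Z) * eVt2
        exact le_trans (neg_le_neg habs) (neg_abs_le _)
      -- bound on last term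
      have m2 : C * (r ^ (α - 2) * A ^ 2 * Vt) ≤
          r ^ (α - 1) * A ^ 2 * W * (lapE ρ x + s *
            (inner ℝ (gradient u x) (gradient ρ x) : ℝ)) := by
        have h := mul_le_mul_of_nonneg_left e2 (by positivity : 0 ≤ r ^ (α - 1) * A ^ 2 * W)
        refine le_trans (le_of_eq ?_) h
        rw [hr1]
        field_simp
        rw [← eVt]
        ring
      -- first term equality
      have m1 : (α - 1) * r ^ (α - 2) * A ^ 2 * W * ‖gradient ρ x‖ ^ 2 =
          (α - 1) * (r ^ (α - 2) * A ^ 2 * Vt) := by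
        rw [hgρx, ← eVt]; ring
      -- AM-GM
      have hquad : 2 * (|A| * q) ≤ c / 2 * A ^ 2 + 2 / c * q ^ 2 := by
        have key : 2 * c * (2 * (|A| * q)) ≤ 2 * c * (c / 2 * A ^ 2 + 2 / c * q ^ 2) := by
          have he : 2 * c * (c / 2 * A ^ 2 + 2 / c * q ^ 2) = c ^ 2 * |A| ^ 2 + 4 * q ^ 2 := by
            rw [sq_abs]; field_simp; ring
          rw [he]
          calc 2 * c * (2 * (|A| * q)) = c ^ 2 * |A| ^ 2 + 4 * q ^ 2
                - (c * |A| - 2 * q) ^ 2 := by ring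
            _ ≤ c ^ 2 * |A| ^ 2 + 4 * q ^ 2 := sub_le_self _ (sq_nonneg _)
        exact le_of_mul_le_mul_left key (mul_pos two_pos hc)
      -- final
      have expand : r ^ (α - 2) * r ^ (2:ℕ) * (Vml * Z) ^ 2 * Vt
          = (r ^ (α - 2) * Vt) * q ^ 2 := by rw [hq_def]; ring
      have hmul := mul_le_mul_of_nonneg_left hquad
        (by positivity : (0:ℝ) ≤ r ^ (α - 2) * Vt)
      have step1 : (α - 1) * (r ^ (α - 2) * A ^ 2 * Vt)
            + -(2 * (r ^ (α - 2) * Vt) * (|A| * q))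
            + C * (r ^ (α - 2) * A ^ 2 * Vt) ≤ Gf x := by
        rw [hGx]
        exact add_le_add (add_le_add (le_of_eq m1.symm) m3) m2
      calc c / 2 * If x - 2 / c * Jf x
          = c / 2 * (r ^ (α - 2) * A ^ 2 * Vt)
              - 2 / c * ((r ^ (α - 2) * Vt) * q ^ 2) := by rw [hIfx, hJfx, expand]
        _ = c * (r ^ (α - 2) * A ^ 2 * Vt) - 2 * (r ^ (α - 2) * Vt) * (|A| * q)
            - ((r ^ (α - 2) * Vt) * (c / 2 * A ^ 2 + 2 / c * q ^ 2)
              - (r ^ (α - 2) * Vt) * (2 * (|A| * q))) := by ring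
        _ ≤ c * (r ^ (α - 2) * A ^ 2 * Vt) - 2 * (r ^ (α - 2) * Vt) * (|A| * q) - 0 :=
            sub_le_sub_left (sub_nonneg.mpr hmul) _
        _ = (α - 1) * (r ^ (α - 2) * A ^ 2 * Vt)
            + -(2 * (r ^ (α - 2) * Vt) * (|A| * q))
            + C * (r ^ (α - 2) * A ^ 2 * Vt) := by rw [hc_def]; ring
        _ ≤ Gf x := step1
    · -- outside the support
      push_neg at hx
      have hxK : x ∉ tsupport φ := fun h => (hφs h) hx
      have h1 : If x = 0 := by
        rw [show If x = ρ x ^ (α - 2) * φ x ^ 2 * Vpow u t x from rfl, hφz x hxK]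
        ring
      have h2 : Jf x = 0 := by
        rw [show Jf x = ρ x ^ α * ‖gradD lam mu u φ x‖ ^ 2 * Vpow u t x from rfl,
          hgradDφ x, hgradφz x hxK]
        simp
      have h3 : Gf x = 0 := by
        rw [show Gf x = ∑ i, fderiv ℝ (Ff u ρ φ α s i) x (EuclideanSpace.single i 1) from rfl]
        refine Finset.sum_eq_zero fun i _ => ?_
        rw [hFfderiv0 i x hxK]
        rfl
      rw [h1, h2, h3]
      norm_num
  -- integrate the pointwise inequality
  have hint : ∫ x, (c / 2 * If x - 2 / c * Jf x) ≤ ∫ x, Gf x := by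
    apply integral_mono _ hGint hkey
    exact ((hIfint.const_mul _).sub (hJfint.const_mul _))
  rw [hGzero] at hint
  rw [integral_sub (hIfint.const_mul _) (hJfint.const_mul _), integral_const_mul,
    integral_const_mul] at hint
  -- conclude
  have hI : c / 2 * ∫ x, If x ≤ 2 / c * ∫ x, Jf x := sub_nonpos.mp hint
  have hfinal : (c / 2) ^ 2 * ∫ x, If x ≤ ∫ x, Jf x := by
    have h := mul_le_mul_of_nonneg_left hI (by positivity : (0:ℝ) ≤ c / 2)
    calc (c / 2) ^ 2 * ∫ x, If x = c / 2 * (c / 2 * ∫ x, If x) := by ring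
      _ ≤ c / 2 * (2 / c * ∫ x, Jf x) := h
      _ = ∫ x, Jf x := by field_simp
  have e1 : (∫ x, ρ x ^ α * ‖gradD lam mu u φ x‖ ^ 2 * Vpow u t x) = ∫ x, Jf x := rfl
  have e2 : (∫ x, ρ x ^ (α - 2) * φ x ^ 2 * Vpow u t x) = ∫ x, If x := rfl
  rw [ge_iff_le, e1, e2]
  exact hfinal
end
end

section
/- (Theorem 3.3, Euclidean model: two-weight Hardy inequality with remainder.) Let a, b : ℝⁿ → ℝ be nonnegative smooth weight functions and let ω : ℝⁿ → ℝ be a positive smooth function satisfying the differential inequality −div(a · V^{τ+μ-λ} · ∇ω) ≥ b · ω · V^{τ+μ-λ} pointwise (almost everywhere) on ℝⁿ. Then for every φ ∈ C_c^∞(ℝⁿ) one has ∫_{ℝⁿ} ( a |∇^D φ|² V^{τ+λ-μ} − b φ² V^{τ+μ-λ} ) dx ≥ ∫_{ℝⁿ} a ω² |∇^D(φ/ω)|² V^{τ+λ-μ} dx. -/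
open MeasureTheory Real

noncomputable section

section Aux

variable {n : ℕ}
local notation "E" => EuclideanSpace ℝ (Fin n)

lemma inner_gradient' (f : E → ℝ) (x v : E) : (inner ℝ (gradient f x) v : ℝ) = fderiv ℝ f x v :=
  InnerProductSpace.toDual_symm_apply

lemma gradient_coord' (f : E → ℝ) (x : E) (i : Fin n) :
    gradient f x i = fderiv ℝ f x (EuclideanSpace.single i 1) := by
  rw [← inner_gradient', EuclideanSpace.inner_single_right]
  simp

lemma gradient_mul' {f g : E → ℝ} {x : E} (hf : DifferentiableAt ℝ f x)
    (hg : DifferentiableAt ℝ g x) :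
    gradient (fun y => f y * g y) x = f x • gradient g x + g x • gradient f x := by
  unfold gradient
  rw [fderiv_fun_mul hf hg, map_add, _root_.map_smul, _root_.map_smul]

lemma gradient_contDiff' {f : E → ℝ} (hf : ContDiff ℝ (⊤ : ℕ∞) f) :
    ContDiff ℝ (⊤ : ℕ∞) (fun x => gradient f x) := by
  have h1 : ContDiff ℝ (⊤ : ℕ∞) (fderiv ℝ f) := hf.fderiv_right (by simp)
  exact ((InnerProductSpace.toDual ℝ E).symm.toContinuousLinearEquiv.contDiff).comp h1

lemma gradient_hasCompactSupport' {f : E → ℝ} (hf : HasCompactSupport f) :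
    HasCompactSupport (fun x => gradient f x) :=
  (hf.fderiv (𝕜 := ℝ)).comp_left (g := (InnerProductSpace.toDual ℝ E).symm) (map_zero _)

lemma ibp' {X : E → E} {g : E → ℝ} (hX : ContDiff ℝ (⊤ : ℕ∞) X) (hg : ContDiff ℝ (⊤ : ℕ∞) g)
    (hgc : HasCompactSupport g) :
    ∫ x, (inner ℝ (X x) (gradient g x) : ℝ) = - ∫ x, divE X x * g x := by
  have hXd : Differentiable ℝ X := hX.differentiable (by simp)
  have hXi : ∀ i : Fin n, ContDiff ℝ (⊤ : ℕ∞) (fun x : E => X x i) := fun i =>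
    (EuclideanSpace.proj (𝕜 := ℝ) i).contDiff.comp hX
  have hgP : ContDiff ℝ (⊤ : ℕ∞) (fderiv ℝ g) := hg.fderiv_right (by simp)
  have hdgc : ∀ i : Fin n, HasCompactSupport
      (fun x => fderiv ℝ g x (EuclideanSpace.single i 1)) := fun i =>
    (hgc.fderiv (𝕜 := ℝ)).comp_left (g := fun L : E →L[ℝ] ℝ => L (EuclideanSpace.single i 1)) rfl
  have hdgcont : ∀ i : Fin n, Continuous fun x => fderiv ℝ g x (EuclideanSpace.single i 1) :=
    fun i => hgP.continuous.clm_apply continuous_const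
  have int1 : ∀ i : Fin n,
      Integrable (fun x => X x i * fderiv ℝ g x (EuclideanSpace.single i 1)) := fun i =>
    ((hXi i).continuous.mul (hdgcont i)).integrable_of_hasCompactSupport ((hdgc i).mul_left)
  have int2 : ∀ i : Fin n,
      Integrable (fun x => fderiv ℝ (fun y => X y i) x (EuclideanSpace.single i 1) * g x) :=
    fun i => ((((hXi i).fderiv_right (m := (⊤ : ℕ∞)) (by simp)).continuous.clm_apply continuous_const).mul
      hg.continuous).integrable_of_hasCompactSupport hgc.mul_left
  have int3 : ∀ i : Fin n, Integrable (fun x => X x i * g x) := fun i =>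
    ((hXi i).continuous.mul hg.continuous).integrable_of_hasCompactSupport hgc.mul_left
  have step : ∀ i : Fin n, ∫ x, X x i * fderiv ℝ g x (EuclideanSpace.single i 1) =
      - ∫ x, fderiv ℝ (fun y => X y i) x (EuclideanSpace.single i 1) * g x := fun i =>
    integral_mul_fderiv_eq_neg_fderiv_mul_of_integrable (int2 i) (int1 i) (int3 i)
      (fun x _ => (hXi i).differentiable (by simp) x) (fun x _ => hg.differentiable (by simp) x)
  calc ∫ x, (inner ℝ (X x) (gradient g x) : ℝ)
      = ∫ x, ∑ i, X x i * fderiv ℝ g x (EuclideanSpace.single i 1) := by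
        congr 1; funext x
        rw [PiLp.inner_apply]
        simp [gradient_coord', mul_comm]
    _ = ∑ i, ∫ x, X x i * fderiv ℝ g x (EuclideanSpace.single i 1) :=
        integral_finset_sum _ (fun i _ => int1 i)
    _ = ∑ i, - ∫ x, fderiv ℝ (fun y => X y i) x (EuclideanSpace.single i 1) * g x :=
        Finset.sum_congr rfl fun i _ => step i
    _ = - ∑ i, ∫ x, fderiv ℝ (fun y => X y i) x (EuclideanSpace.single i 1) * g x := by
        rw [Finset.sum_neg_distrib]
    _ = - ∫ x, ∑ i, fderiv ℝ (fun y => X y i) x (EuclideanSpace.single i 1) * g x := by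
        rw [integral_finset_sum _ (fun i _ => int2 i)]
    _ = - ∫ x, divE X x * g x := by
        congr 1; apply integral_congr_ae; filter_upwards with x
        rw [divE, Finset.sum_mul]
        refine Finset.sum_congr rfl fun i _ => ?_
        have h : fderiv ℝ (fun y => X y i) x =
            (EuclideanSpace.proj (𝕜 := ℝ) i).comp (fderiv ℝ X x) :=
          ((EuclideanSpace.proj (𝕜 := ℝ) i).hasFDerivAt.comp x (hXd x).hasFDerivAt).fderiv
        rw [h]; rfl

end Aux

theorem stmt4 {n : ℕ} (hn : 1 ≤ n) (lam mu : ℝ)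
    (u : EuclideanSpace ℝ (Fin n) → ℝ) (hu : ContDiff ℝ (⊤ : ℕ∞) u)
    (τ : ℝ) (hτ : τ = ((n : ℝ) + 1) * lam + mu)
    (a b : EuclideanSpace ℝ (Fin n) → ℝ) (ha : ContDiff ℝ (⊤ : ℕ∞) a) (hb : ContDiff ℝ (⊤ : ℕ∞) b)
    (ha0 : ∀ x, 0 ≤ a x) (hb0 : ∀ x, 0 ≤ b x)
    (ω : EuclideanSpace ℝ (Fin n) → ℝ) (hω : ContDiff ℝ (⊤ : ℕ∞) ω) (hω0 : ∀ x, 0 < ω x)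
    (hdiff : ∀ x, b x * ω x * Vpow u (τ + mu - lam) x ≤
      -divE (fun y => (a y * Vpow u (τ + mu - lam) y) • gradient ω y) x)
    (φ : EuclideanSpace ℝ (Fin n) → ℝ) (hφ : ContDiff ℝ (⊤ : ℕ∞) φ)
    (hφc : HasCompactSupport φ) :
    ∫ x, (a x * ‖gradD lam mu u φ x‖ ^ 2 * Vpow u (τ + lam - mu) x -
        b x * φ x ^ 2 * Vpow u (τ + mu - lam) x) ≥
      ∫ x, a x * ω x ^ 2 * ‖gradD lam mu u (fun y => φ y / ω y) x‖ ^ 2 *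
        Vpow u (τ + lam - mu) x := by
  have hωne : ∀ x, ω x ≠ 0 := fun x => (hω0 x).ne'
  set ψ : EuclideanSpace ℝ (Fin n) → ℝ := fun y => φ y / ω y with hψdef
  set g : EuclideanSpace ℝ (Fin n) → ℝ := fun y => φ y ^ 2 / ω y with hgdef
  set X : EuclideanSpace ℝ (Fin n) → EuclideanSpace ℝ (Fin n) :=
    fun y => (a y * Vpow u (τ + mu - lam) y) • gradient ω y with hXdef
  -- smoothness
  have hVs : ∀ s : ℝ, ContDiff ℝ (⊤ : ℕ∞) (Vpow u s) := fun s =>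
    Real.contDiff_exp.comp (contDiff_const.mul hu)
  have hψs : ContDiff ℝ (⊤ : ℕ∞) ψ := hφ.div hω hωne
  have hgs : ContDiff ℝ (⊤ : ℕ∞) g := (hφ.pow 2).div hω hωne
  have hXs : ContDiff ℝ (⊤ : ℕ∞) X := (ha.mul (hVs _)).smul (gradient_contDiff' hω)
  have hφd : Differentiable ℝ φ := hφ.differentiable (by simp)
  have hωd : Differentiable ℝ ω := hω.differentiable (by simp)
  have hψd : Differentiable ℝ ψ := hψs.differentiable (by simp)
  -- compact supports
  have hψc : HasCompactSupport ψ := by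
    have h := hφc.mul_right (f' := fun x => (ω x)⁻¹)
    simpa [hψdef, div_eq_mul_inv, Pi.mul_def] using h
  have hgc : HasCompactSupport g := by
    have h := hφc.mul_right (f' := fun x => φ x / ω x)
    have : (fun x => φ x * (φ x / ω x)) = g := by
      funext x; rw [hgdef]; ring
    simpa [Pi.mul_def, this] using h
  have hφ2c : HasCompactSupport (fun x => φ x ^ 2) := by
    have h := hφc.mul_right (f' := φ)
    simpa [Pi.mul_def, sq] using h
  have hgradφc : HasCompactSupport (fun x => gradient φ x) := gradient_hasCompactSupport' hφc
  have hgradψc : HasCompactSupport (fun x => gradient ψ x) := gradient_hasCompactSupport' hψc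
  have hgradgc : HasCompactSupport (fun x => gradient g x) := gradient_hasCompactSupport' hgc
  -- gradient product formulas
  have hφeq : ∀ x, gradient φ x = ψ x • gradient ω x + ω x • gradient ψ x := by
    intro x
    have hrepr : φ = fun y => ψ y * ω y := funext fun y => (div_mul_cancel₀ (φ y) (hωne y)).symm
    conv_lhs => rw [hrepr]
    exact gradient_mul' (hψd x) (hωd x)
  have hgeq : ∀ x, gradient g x =
      (ψ x * ψ x) • gradient ω x + ω x • (ψ x • gradient ψ x + ψ x • gradient ψ x) := by
    intro x
    have hrepr : g = fun y => (ψ y * ψ y) * ω y := by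
      funext y; simp only [hgdef, hψdef]
      rw [mul_assoc, div_mul_cancel₀ _ (hωne y)]
      ring
    conv_lhs => rw [hrepr]
    rw [gradient_mul' (f := fun y => ψ y * ψ y) ((hψd x).mul (hψd x)) (hωd x)]
    congr 1
    rw [gradient_mul' (hψd x) (hψd x)]
  -- exponent arithmetic
  have hVmul : ∀ x, Vpow u (mu - lam) x ^ 2 * Vpow u (τ + lam - mu) x =
      Vpow u (τ + mu - lam) x := by
    intro x
    simp only [Vpow]
    rw [sq, ← Real.exp_add, ← Real.exp_add]
    congr 1; ring
  -- integrand rewrites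
  have eqL : ∀ x, a x * ‖gradD lam mu u φ x‖ ^ 2 * Vpow u (τ + lam - mu) x =
      a x * Vpow u (τ + mu - lam) x * ‖gradient φ x‖ ^ 2 := by
    intro x
    simp only [gradD, norm_smul, mul_pow, Real.norm_eq_abs, sq_abs]
    linear_combination (a x * ‖gradient φ x‖ ^ 2) * hVmul x
  have eqR : ∀ x, a x * ω x ^ 2 * ‖gradD lam mu u ψ x‖ ^ 2 * Vpow u (τ + lam - mu) x =
      a x * Vpow u (τ + mu - lam) x * ω x ^ 2 * ‖gradient ψ x‖ ^ 2 := by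
    intro x
    simp only [gradD, norm_smul, mul_pow, Real.norm_eq_abs, sq_abs]
    linear_combination (a x * ω x ^ 2 * ‖gradient ψ x‖ ^ 2) * hVmul x
  -- key pointwise identity
  have key : ∀ x, a x * Vpow u (τ + mu - lam) x * ‖gradient φ x‖ ^ 2 -
      a x * Vpow u (τ + mu - lam) x * ω x ^ 2 * ‖gradient ψ x‖ ^ 2 =
      (inner ℝ (X x) (gradient g x) : ℝ) := by
    intro x
    rw [hXdef]
    simp only []
    rw [real_inner_smul_left, hφeq x, hgeq x]
    simp only [norm_add_sq_real, inner_add_right, real_inner_smul_left, real_inner_smul_right,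
      norm_smul, mul_pow, Real.norm_eq_abs, sq_abs, real_inner_self_eq_norm_sq]
    ring
  -- integrability
  have hgradφcont : Continuous (fun x => gradient φ x) := (gradient_contDiff' hφ).continuous
  have hgradψcont : Continuous (fun x => gradient ψ x) := (gradient_contDiff' hψs).continuous
  have hgradgcont : Continuous (fun x => gradient g x) := (gradient_contDiff' hgs).continuous
  have intL1 : Integrable (fun x => a x * Vpow u (τ + mu - lam) x * ‖gradient φ x‖ ^ 2) := by
    refine Continuous.integrable_of_hasCompactSupport
      ((ha.continuous.mul (hVs _).continuous).mul ((hgradφcont.norm).pow 2)) ?_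
    have h := (hgradφc.comp_left (g := fun v : EuclideanSpace ℝ (Fin n) => ‖v‖ ^ 2)
      (by simp)).mul_left (f := fun x => a x * Vpow u (τ + mu - lam) x)
    simpa [Pi.mul_def, Function.comp] using h
  have intL2 : Integrable (fun x => b x * φ x ^ 2 * Vpow u (τ + mu - lam) x) := by
    refine Continuous.integrable_of_hasCompactSupport
      ((hb.continuous.mul ((hφ.continuous).pow 2)).mul (hVs _).continuous) ?_
    have h := (hφ2c.mul_left (f := b)).mul_right (f' := Vpow u (τ + mu - lam))
    simpa [Pi.mul_def] using h
  have intR : Integrable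
      (fun x => a x * Vpow u (τ + mu - lam) x * ω x ^ 2 * ‖gradient ψ x‖ ^ 2) := by
    refine Continuous.integrable_of_hasCompactSupport
      (((ha.continuous.mul (hVs _).continuous).mul ((hω.continuous).pow 2)).mul
        ((hgradψcont.norm).pow 2)) ?_
    have h := (hgradψc.comp_left (g := fun v : EuclideanSpace ℝ (Fin n) => ‖v‖ ^ 2)
      (by simp)).mul_left (f := fun x => a x * Vpow u (τ + mu - lam) x * ω x ^ 2)
    simpa [Pi.mul_def, Function.comp] using h
  have intIP : Integrable (fun x => (inner ℝ (X x) (gradient g x) : ℝ)) := by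
    refine Continuous.integrable_of_hasCompactSupport
      (hXs.continuous.inner hgradgcont) ?_
    refine hgradgc.mono ?_
    intro x hx
    simp only [Function.mem_support, ne_eq] at hx ⊢
    intro h0
    exact hx (by rw [h0, inner_zero_right])
  have intDiv : Integrable (fun x => divE X x * g x) := by
    have hdivcont : Continuous (divE X) := by
      refine continuous_finset_sum _ fun i _ => ?_
      have h1 : Continuous fun x => fderiv ℝ X x (EuclideanSpace.single i 1) :=
        ((hXs.fderiv_right (m := (⊤ : ℕ∞)) (by simp)).continuous).clm_apply continuous_const
      exact ((EuclideanSpace.proj (𝕜 := ℝ) i).continuous.comp h1 : _)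
    refine Continuous.integrable_of_hasCompactSupport (hdivcont.mul hgs.continuous) ?_
    have h := hgc.mul_left (f := divE X)
    simpa [Pi.mul_def] using h
  -- rewrite both sides
  have E1 : ∫ x, (a x * ‖gradD lam mu u φ x‖ ^ 2 * Vpow u (τ + lam - mu) x -
      b x * φ x ^ 2 * Vpow u (τ + mu - lam) x) =
      ∫ x, (a x * Vpow u (τ + mu - lam) x * ‖gradient φ x‖ ^ 2 -
        b x * φ x ^ 2 * Vpow u (τ + mu - lam) x) := by
    apply integral_congr_ae; filter_upwards with x; rw [eqL x]
  have E2 : ∫ x, a x * ω x ^ 2 * ‖gradD lam mu u ψ x‖ ^ 2 * Vpow u (τ + lam - mu) x =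
      ∫ x, a x * Vpow u (τ + mu - lam) x * ω x ^ 2 * ‖gradient ψ x‖ ^ 2 := by
    apply integral_congr_ae; filter_upwards with x; rw [eqR x]
  rw [ge_iff_le, E1, E2, ← sub_nonneg]
  have iAB : Integrable (fun x => a x * Vpow u (τ + mu - lam) x * ‖gradient φ x‖ ^ 2 -
      b x * φ x ^ 2 * Vpow u (τ + mu - lam) x) := intL1.sub intL2
  have E3 : (∫ x, (a x * Vpow u (τ + mu - lam) x * ‖gradient φ x‖ ^ 2 -
        b x * φ x ^ 2 * Vpow u (τ + mu - lam) x)) -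
      (∫ x, a x * Vpow u (τ + mu - lam) x * ω x ^ 2 * ‖gradient ψ x‖ ^ 2) =
      ∫ x, ((inner ℝ (X x) (gradient g x) : ℝ) - b x * φ x ^ 2 * Vpow u (τ + mu - lam) x) := by
    rw [← integral_sub iAB intR]
    apply integral_congr_ae; filter_upwards with x
    rw [← key x]; ring
  rw [E3]
  rw [integral_sub intIP intL2, ibp' hXs hgs hgc]
  have iND : Integrable (fun x => -(divE X x * g x)) := intDiv.neg
  rw [← integral_neg, ← integral_sub iND intL2]
  refine integral_nonneg fun x => ?_
  have hg0 : 0 ≤ g x := div_nonneg (sq_nonneg _) (hω0 x).le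
  have h1 : b x * ω x * Vpow u (τ + mu - lam) x * g x ≤ -divE X x * g x :=
    mul_le_mul_of_nonneg_right (hdiff x) hg0
  have h2 : b x * ω x * Vpow u (τ + mu - lam) x * g x =
      b x * φ x ^ 2 * Vpow u (τ + mu - lam) x := by
    simp only [hgdef]
    linear_combination (b x * Vpow u (τ + mu - lam) x) * div_mul_cancel₀ (φ x ^ 2) (hωne x)
  simp only [Pi.zero_apply]
  linarith [h1, h2]
end
end

section
/- (Theorem 4.2(i), Euclidean model: Rellich-type inequality connecting first and second order derivatives.) Let C < 1 and 2 < α < 3 - C. Assume Δ^D ρ ≤ (C/ρ)·V^{λ-μ} pointwise on ℝⁿ \ ρ^{-1}{0}. Then for every φ ∈ C_c^∞(ℝⁿ \ ρ^{-1}{0}) one has ∫_{ℝⁿ} ρ^α (Δ^D φ)² V^{τ+μ-λ} dx ≥ 2(α-2)(3-α-C) ∫_{ℝⁿ} ρ^{α-2} |∇^D φ|² V^{τ+λ-μ} dx. -/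
open MeasureTheory Real

noncomputable section

set_option maxHeartbeats 1600000

variable {n : ℕ}



theorem integral_fderiv_apply_eq_zero {f : EuclideanSpace ℝ (Fin n) → ℝ} (hf : ContDiff ℝ 1 f)
    (hfc : HasCompactSupport f) (v : EuclideanSpace ℝ (Fin n)) : ∫ x, fderiv ℝ f x v = 0 := by
  have hd : Differentiable ℝ f := hf.differentiable one_ne_zero
  have hcont : Continuous fun x => fderiv ℝ f x v :=
    (hf.continuous_fderiv one_ne_zero).clm_apply continuous_const
  have hsupp : HasCompactSupport fun x => fderiv ℝ f x v := by
    apply HasCompactSupport.intro hfc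
    intro x hx
    have h0 : f =ᶠ[nhds x] (fun _ => (0:ℝ)) := by
      filter_upwards [(hfc.isClosed.isOpen_compl).mem_nhds hx] with y hy
      exact image_eq_zero_of_notMem_tsupport hy
    rw [h0.fderiv_eq, fderiv_fun_const]
    rfl
  have key := integral_mul_fderiv_eq_neg_fderiv_mul_of_integrable
    (μ := (volume : Measure (EuclideanSpace ℝ (Fin n))))
    (f := f) (g := fun _ => (1:ℝ)) (v := v)
    ?_ ?_ ?_ (fun x _ => hd x) (fun x _ => differentiableAt_const _)
  · have h1 : ∀ x : EuclideanSpace ℝ (Fin n), fderiv ℝ (fun _ => (1:ℝ)) x v = 0 := by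
      intro x; rw [fderiv_fun_const]; rfl
    simp only [h1, mul_zero, mul_one, integral_zero] at key
    linarith [key]
  · simpa [mul_one] using hcont.integrable_of_hasCompactSupport hsupp
  · have h1 : ∀ x : EuclideanSpace ℝ (Fin n), fderiv ℝ (fun _ => (1:ℝ)) x v = 0 := by
      intro x; rw [fderiv_fun_const]; rfl
    simp only [h1, mul_zero]
    exact integrable_zero _ _ _
  · simpa [mul_one] using (hf.continuous).integrable_of_hasCompactSupport hfc

lemma sum_single_eq (y : EuclideanSpace ℝ (Fin n)) :
    ∑ i, y i • EuclideanSpace.single i (1:ℝ) = y := by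
  have := (EuclideanSpace.basisFun (Fin n) ℝ).sum_repr y
  simpa [EuclideanSpace.basisFun_apply, EuclideanSpace.basisFun_repr] using this

lemma clm_sum_apply (L : EuclideanSpace ℝ (Fin n) →L[ℝ] ℝ) (y : EuclideanSpace ℝ (Fin n)) :
    ∑ i, L (EuclideanSpace.single i 1) * y i = L y := by
  conv_rhs => rw [← sum_single_eq y]
  rw [map_sum]
  congr 1; funext i
  rw [L.map_smul]; simp [mul_comm]

lemma inner_gradient_eq (f : EuclideanSpace ℝ (Fin n) → ℝ) (x v : EuclideanSpace ℝ (Fin n)) :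
    (inner ℝ (gradient f x) v : ℝ) = fderiv ℝ f x v :=
  InnerProductSpace.toDual_symm_apply

lemma divE_smul {f : EuclideanSpace ℝ (Fin n) → ℝ} {Y : EuclideanSpace ℝ (Fin n) → EuclideanSpace ℝ (Fin n)}
    {x : EuclideanSpace ℝ (Fin n)} (hf : DifferentiableAt ℝ f x) (hY : DifferentiableAt ℝ Y x) :
    divE (fun y => f y • Y y) x = fderiv ℝ f x (Y x) + f x * divE Y x := by
  have h : HasFDerivAt (fun y => f y • Y y) _ x := (hf.hasFDerivAt.smul hY.hasFDerivAt)
  unfold divE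
  rw [h.fderiv]
  simp only [ContinuousLinearMap.add_apply, ContinuousLinearMap.smul_apply,
    ContinuousLinearMap.smulRight_apply, PiLp.add_apply, PiLp.smul_apply, smul_eq_mul]
  rw [Finset.sum_add_distrib, ← clm_sum_apply (fderiv ℝ f x) (Y x), Finset.mul_sum]
  ring

lemma divE_of_eventually_zero {X : EuclideanSpace ℝ (Fin n) → EuclideanSpace ℝ (Fin n)}
    {x : EuclideanSpace ℝ (Fin n)} (h : X =ᶠ[nhds x] (fun _ => 0)) : divE X x = 0 := by
  unfold divE
  rw [h.fderiv_eq, fderiv_fun_const]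
  simp

lemma contDiff_gradient' {f : EuclideanSpace ℝ (Fin n) → ℝ} (hf : ContDiff ℝ (⊤ : ℕ∞) f) :
    ContDiff ℝ (⊤ : ℕ∞) (fun x => gradient f x) := by
  have h1 : ContDiff ℝ (⊤ : ℕ∞) (fderiv ℝ f) := hf.fderiv_right (by simp)
  exact (InnerProductSpace.toDual ℝ (EuclideanSpace ℝ (Fin n))).symm.contDiff.comp h1

lemma continuous_divE {X : EuclideanSpace ℝ (Fin n) → EuclideanSpace ℝ (Fin n)}
    (hX : ContDiff ℝ 1 X) : Continuous (divE X) := by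
  unfold divE
  apply continuous_finset_sum
  intro i _
  have h1 : Continuous (fderiv ℝ X) := hX.continuous_fderiv one_ne_zero
  exact ((EuclideanSpace.proj i (𝕜 := ℝ)).continuous).comp (h1.clm_apply continuous_const)

theorem integral_divE_eq_zero {X : EuclideanSpace ℝ (Fin n) → EuclideanSpace ℝ (Fin n)}
    (hX : ContDiff ℝ 1 X) (hXc : HasCompactSupport X) : ∫ x, divE X x = 0 := by
  have hXd : Differentiable ℝ X := hX.differentiable one_ne_zero
  have hcomp : ∀ i : Fin n, ∀ x, fderiv ℝ X x (EuclideanSpace.single i 1) i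
      = fderiv ℝ (fun y => X y i) x (EuclideanSpace.single i 1) := by
    intro i x
    have h2 : (fun y => X y i) = (⇑(EuclideanSpace.proj i (𝕜 := ℝ)) ∘ X) := rfl
    rw [h2, ((EuclideanSpace.proj i (𝕜 := ℝ)).hasFDerivAt.comp x
      (hXd x).hasFDerivAt).fderiv]
    rfl
  have hint : ∀ i : Fin n, Integrable (fun x => fderiv ℝ X x (EuclideanSpace.single i 1) i)
      (volume : Measure (EuclideanSpace ℝ (Fin n))) := by
    intro i
    apply Continuous.integrable_of_hasCompactSupport
    · exact ((EuclideanSpace.proj i (𝕜 := ℝ)).continuous).comp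
        ((hX.continuous_fderiv one_ne_zero).clm_apply continuous_const)
    · apply HasCompactSupport.intro hXc
      intro x hx
      have h0 : X =ᶠ[nhds x] (fun _ => 0) := by
        filter_upwards [(hXc.isClosed.isOpen_compl).mem_nhds hx] with y hy
        exact image_eq_zero_of_notMem_tsupport hy
      rw [h0.fderiv_eq, fderiv_fun_const]
      rfl
  unfold divE
  rw [integral_finset_sum _ (fun i _ => hint i)]
  apply Finset.sum_eq_zero
  intro i _
  simp only [hcomp i]
  exact integral_fderiv_apply_eq_zero (f := fun y => X y i)
    ((EuclideanSpace.proj i (𝕜 := ℝ)).contDiff.comp hX)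
    (show HasCompactSupport fun y => X y i from
      hXc.comp_left (g := fun v : EuclideanSpace ℝ (Fin n) => v i) rfl) _


lemma hasFDerivAt_rpow_comp {f : EuclideanSpace ℝ (Fin n) → ℝ} {f' : EuclideanSpace ℝ (Fin n) →L[ℝ] ℝ}
    {x : EuclideanSpace ℝ (Fin n)} (hf : HasFDerivAt f f' x) (hne : f x ≠ 0) (β : ℝ) :
    HasFDerivAt (fun y => f y ^ β) ((β * f x ^ (β - 1)) • f') x :=
  (Real.hasDerivAt_rpow_const (Or.inl hne)).comp_hasFDerivAt x hf

lemma hasFDerivAt_exp_mul {u : EuclideanSpace ℝ (Fin n) → ℝ} {du : EuclideanSpace ℝ (Fin n) →L[ℝ] ℝ}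
    {x : EuclideanSpace ℝ (Fin n)} (c : ℝ) (hu : HasFDerivAt u du x) :
    HasFDerivAt (fun y => Real.exp (c * u y)) ((c * Real.exp (c * u x)) • du) x := by
  have h := (Real.hasDerivAt_exp (c * u x)).comp_hasFDerivAt x (hu.const_mul c)
  have e : (c * Real.exp (c * u x)) • du = Real.exp (c * u x) • c • du := by
    rw [smul_smul, mul_comm]
  rw [e]; exact h

lemma integrable_aux {h : EuclideanSpace ℝ (Fin n) → ℝ} {U K : Set (EuclideanSpace ℝ (Fin n))}
    (hU : IsOpen U) (hK : IsCompact K) (hKU : K ⊆ U)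
    (h1 : ContinuousOn h U) (h2 : ∀ x ∉ K, h x = 0) :
    Integrable h (volume : Measure (EuclideanSpace ℝ (Fin n))) := by
  have hKc : IsClosed K := hK.isClosed
  have hcont : Continuous h := by
    rw [continuous_iff_continuousAt]
    intro x
    by_cases hx : x ∈ U
    · exact h1.continuousAt (hU.mem_nhds hx)
    · have hxK : x ∉ K := fun hxk => hx (hKU hxk)
      apply Filter.EventuallyEq.continuousAt (y := 0)
      filter_upwards [hKc.isOpen_compl.mem_nhds hxK] with y hy
      exact h2 y hy
  exact hcont.integrable_of_hasCompactSupport (HasCompactSupport.intro hK h2)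

lemma divE_formula {ψ ρ u f : EuclideanSpace ℝ (Fin n) → ℝ} {x : EuclideanSpace ℝ (Fin n)}
    (hψ : DifferentiableAt ℝ ψ x) (hρd : DifferentiableAt ℝ ρ x) (hud : DifferentiableAt ℝ u x)
    (hGf : DifferentiableAt ℝ (fun y => gradient f y) x) (hx : ρ x ≠ 0) (β c : ℝ) :
    divE (fun y => (ψ y * (ρ y ^ β * Real.exp (c * u y))) • gradient f y) x
      = (ρ x ^ β * Real.exp (c * u x)) * (fderiv ℝ ψ x (gradient f x))
        + ψ x * (β * ρ x ^ (β - 1) * Real.exp (c * u x)) * (inner ℝ (gradient ρ x) (gradient f x) : ℝ)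
        + ψ x * (ρ x ^ β * (c * Real.exp (c * u x))) * (inner ℝ (gradient u x) (gradient f x) : ℝ)
        + ψ x * (ρ x ^ β * Real.exp (c * u x)) * lapE f x := by
  have hr := hasFDerivAt_rpow_comp hρd.hasFDerivAt hx β
  have hw := hasFDerivAt_exp_mul c hud.hasFDerivAt
  have hrw := hr.mul hw
  have hF : HasFDerivAt (fun y => ψ y * (ρ y ^ β * Real.exp (c * u y))) _ x := hψ.hasFDerivAt.mul hrw
  rw [divE_smul hF.differentiableAt hGf, hF.fderiv]
  have h1 := inner_gradient_eq ρ x (gradient f x)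
  have h2 := inner_gradient_eq u x (gradient f x)
  unfold lapE
  simp only [ContinuousLinearMap.add_apply, ContinuousLinearMap.smul_apply, smul_eq_mul, Pi.mul_apply]
  rw [← h1, ← h2]
  ring

lemma amgm {L B M k : ℝ} (hL : 0 ≤ L) (hB : 0 ≤ B) (hk : 0 < k) (h : M ^ 2 = L * B) :
    -M ≤ L / (4 * k) + k * B := by
  rcases eq_or_lt_of_le hL with h0 | hLpos
  · have hM : M = 0 := by
      have : M ^ 2 = 0 := by rw [h, ← h0, zero_mul]
      exact pow_eq_zero_iff (by norm_num) |>.mp this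
    rw [hM, ← h0]
    have : 0 ≤ k * B := mul_nonneg hk.le hB
    simp only [neg_zero, zero_div]
    linarith
  · have h4 : (0:ℝ) < 4 * k := by positivity
    have key : (-M - k * B) * (4 * k) ≤ L := by
      have expand : L * (L + 4 * k * M + 4 * k ^ 2 * B) = (L + 2 * k * M) ^ 2 := by
        linear_combination (-4) * k ^ 2 * h
      have pos : 0 ≤ L + 4 * k * M + 4 * k ^ 2 * B :=
        (mul_nonneg_iff_of_pos_left hLpos).mp (expand ▸ sq_nonneg (L + 2 * k * M))
      nlinarith [pos]
    have h5 : -M - k * B ≤ L / (4 * k) := (le_div_iff₀ h4).mpr key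
    linarith

lemma X_smooth {ψ ρ u : EuclideanSpace ℝ (Fin n) → ℝ} {Y : EuclideanSpace ℝ (Fin n) → EuclideanSpace ℝ (Fin n)}
    (hψ : ContDiff ℝ (⊤ : ℕ∞) ψ) (hρ : ContDiff ℝ (⊤ : ℕ∞) ρ) (hu : ContDiff ℝ (⊤ : ℕ∞) u) (hY : ContDiff ℝ (⊤ : ℕ∞) Y)
    (hsup : tsupport ψ ⊆ {x | ρ x ≠ 0}) (β c : ℝ) :
    ContDiff ℝ 1 (fun x => (ψ x * (ρ x ^ β * Real.exp (c * u x))) • Y x) := by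
  rw [contDiff_iff_contDiffAt]
  intro x
  by_cases hx : ρ x ≠ 0
  · have h1 : ContDiffAt ℝ (⊤ : ℕ∞) (fun y => ρ y ^ β) x :=
      (Real.contDiffAt_rpow_const_of_ne hx).comp x hρ.contDiffAt
    have h2 : ContDiffAt ℝ (⊤ : ℕ∞) (fun y => Real.exp (c * u y)) x :=
      (Real.contDiff_exp.comp (contDiff_const.mul hu)).contDiffAt
    exact ((hψ.contDiffAt.mul (h1.mul h2)).smul hY.contDiffAt).of_le (by simp)
  · have hxs : x ∉ tsupport ψ := fun hmem => hx (hsup hmem)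
    apply ContDiffAt.congr_of_eventuallyEq (contDiffAt_const (c := (0 : EuclideanSpace ℝ (Fin n))))
    filter_upwards [(isClosed_tsupport ψ).isOpen_compl.mem_nhds hxs] with y hy
    rw [image_eq_zero_of_notMem_tsupport hy, zero_mul, zero_smul]

lemma X_supp {ψ ρ u : EuclideanSpace ℝ (Fin n) → ℝ} {Y : EuclideanSpace ℝ (Fin n) → EuclideanSpace ℝ (Fin n)}
    (hψc : HasCompactSupport ψ) (β c : ℝ) :
    HasCompactSupport (fun x => (ψ x * (ρ x ^ β * Real.exp (c * u x))) • Y x) := by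
  apply HasCompactSupport.intro hψc
  intro x hx
  rw [image_eq_zero_of_notMem_tsupport hx, zero_mul, zero_smul]

lemma continuousOn_rpow_comp {ρ : EuclideanSpace ℝ (Fin n) → ℝ} (hρ : Continuous ρ) (β : ℝ) :
    ContinuousOn (fun x => ρ x ^ β) {x | ρ x ≠ 0} := by
  intro x hx
  exact ((Real.continuousAt_rpow_const (ρ x) β (Or.inl hx)).comp hρ.continuousAt).continuousWithinAt


lemma exp_arrange (r P a b : ℝ) :
    r * (Real.exp a * P) ^ 2 * Real.exp b = r * P ^ 2 * Real.exp (2 * a + b) := by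
  calc r * (Real.exp a * P) ^ 2 * Real.exp b
      = Real.exp a * Real.exp a * Real.exp b * (r * P ^ 2) := by ring
    _ = Real.exp (2 * a + b) * (r * P ^ 2) := by
        rw [← Real.exp_add, ← Real.exp_add]; ring_nf
    _ = r * P ^ 2 * Real.exp (2 * a + b) := by ring

theorem stmt9 {n : ℕ} (hn : 1 ≤ n) (lam mu : ℝ)
    (u : EuclideanSpace ℝ (Fin n) → ℝ) (hu : ContDiff ℝ (⊤ : ℕ∞) u)
    (τ : ℝ) (hτ : τ = ((n : ℝ) + 1) * lam + mu)
    (ρ : EuclideanSpace ℝ (Fin n) → ℝ) (hρsm : ContDiff ℝ (⊤ : ℕ∞) ρ)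
    (hρ0 : ∀ x, 0 ≤ ρ x)
    (hρg : ∀ x, ρ x ≠ 0 → ‖gradD lam mu u ρ x‖ = 1)
    (C α : ℝ) (hC : C < 1) (hα1 : 2 < α) (hα2 : α < 3 - C)
    (hΔ : ∀ x, ρ x ≠ 0 → lapD lam mu u ρ x ≤ (C / ρ x) * Vpow u (lam - mu) x)
    (φ : EuclideanSpace ℝ (Fin n) → ℝ) (hφ : ContDiff ℝ (⊤ : ℕ∞) φ)
    (hφc : HasCompactSupport φ) (hφs : tsupport φ ⊆ {x | ρ x ≠ 0}) :
    ∫ x, ρ x ^ α * (lapD lam mu u φ x) ^ 2 * Vpow u (τ + mu - lam) x ≥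
      2 * (α - 2) * (3 - α - C) *
        ∫ x, ρ x ^ (α - 2) * ‖gradD lam mu u φ x‖ ^ 2 * Vpow u (τ + lam - mu) x := by
  classical
  have hρc : Continuous ρ := hρsm.continuous
  have hUopen : IsOpen {x : EuclideanSpace ℝ (Fin n) | ρ x ≠ 0} := by
    have h : {x : EuclideanSpace ℝ (Fin n) | ρ x ≠ 0} = ρ ⁻¹' ({0}ᶜ) := rfl
    rw [h]
    exact (isOpen_compl_singleton).preimage hρc
  have hK : IsCompact (tsupport φ) := hφc
  have hρpos : ∀ x : EuclideanSpace ℝ (Fin n), ρ x ≠ 0 → 0 < ρ x :=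
    fun x hx => (hρ0 x).lt_of_ne (Ne.symm hx)
  have hφd : Differentiable ℝ φ := hφ.differentiable (by simp)
  have hρd : Differentiable ℝ ρ := hρsm.differentiable (by simp)
  have hud : Differentiable ℝ u := hu.differentiable (by simp)
  have hGφ : ContDiff ℝ (⊤ : ℕ∞) (fun x => gradient φ x) := contDiff_gradient' hφ
  have hGρ : ContDiff ℝ (⊤ : ℕ∞) (fun x => gradient ρ x) := contDiff_gradient' hρsm
  have hGu : ContDiff ℝ (⊤ : ℕ∞) (fun x => gradient u x) := contDiff_gradient' hu
  have hGφd : Differentiable ℝ (fun x => gradient φ x) := hGφ.differentiable (by simp)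
  have hGρd : Differentiable ℝ (fun x => gradient ρ x) := hGρ.differentiable (by simp)
  have hlapφ : Continuous (fun x => lapE φ x) := continuous_divE (hGφ.of_le (by simp))
  have hlapρ : Continuous (fun x => lapE ρ x) := continuous_divE (hGρ.of_le (by simp))
  have hφ0 : ∀ x, x ∉ tsupport φ → φ x = 0 := fun x hx => image_eq_zero_of_notMem_tsupport hx
  have hgrad0 : ∀ x, x ∉ tsupport φ → gradient φ x = 0 := by
    intro x hx
    have hev : φ =ᶠ[nhds x] (fun _ => (0:ℝ)) := by
      filter_upwards [(isClosed_tsupport φ).isOpen_compl.mem_nhds hx] with y hy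
      exact hφ0 y hy
    have hfd : fderiv ℝ φ x = 0 := by
      rw [hev.fderiv_eq]
      exact fderiv_const_apply 0
    show (InnerProductSpace.toDual ℝ (EuclideanSpace ℝ (Fin n))).symm (fderiv ℝ φ x) = 0
    rw [hfd]
    simp
  have hlap0 : ∀ x, x ∉ tsupport φ → lapE φ x = 0 := by
    intro x hx
    apply divE_of_eventually_zero
    filter_upwards [(isClosed_tsupport φ).isOpen_compl.mem_nhds hx] with y hy
    exact hgrad0 y hy
  set c : ℝ := 2 * mu + (n : ℝ) * lam with hc
  set k : ℝ := (α - 2) * (3 - α - C) / 2 with hk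
  have hkpos : 0 < k := by
    rw [hk]
    have h1 : 0 < α - 2 := by linarith
    have h2 : 0 < 3 - α - C := by linarith
    positivity
  set fp : EuclideanSpace ℝ (Fin n) → ℝ :=
    fun x => lapE φ x + c * (inner ℝ (gradient u x) (gradient φ x) : ℝ) with hfp
  set fqq : EuclideanSpace ℝ (Fin n) → ℝ :=
    fun x => lapE ρ x + c * (inner ℝ (gradient u x) (gradient ρ x) : ℝ) with hfqq
  set fa : EuclideanSpace ℝ (Fin n) → ℝ :=
    fun x => ρ x ^ (α - 2) * ‖gradient φ x‖ ^ 2 * Real.exp (c * u x) with hfa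
  set fg : EuclideanSpace ℝ (Fin n) → ℝ :=
    fun x => φ x * ρ x ^ (α - 3) * (inner ℝ (gradient ρ x) (gradient φ x) : ℝ) *
      Real.exp (c * u x) with hfg
  set fm : EuclideanSpace ℝ (Fin n) → ℝ :=
    fun x => φ x * ρ x ^ (α - 2) * fp x * Real.exp (c * u x) with hfm
  set fb : EuclideanSpace ℝ (Fin n) → ℝ :=
    fun x => φ x * φ x * ρ x ^ (α - 4) * Real.exp (2 * (lam - mu) * u x) *
      Real.exp (c * u x) with hfb
  set fq : EuclideanSpace ℝ (Fin n) → ℝ :=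
    fun x => φ x * φ x * ρ x ^ (α - 3) * fqq x * Real.exp (c * u x) with hfq
  set fl : EuclideanSpace ℝ (Fin n) → ℝ :=
    fun x => ρ x ^ α * fp x ^ 2 * Real.exp ((c - 2 * (lam - mu)) * u x) with hfl
  have hfp0 : ∀ x, x ∉ tsupport φ → fp x = 0 := by
    intro x hx
    rw [hfp]
    simp [hlap0 x hx, hgrad0 x hx]
  have hflnn : ∀ x, 0 ≤ fl x := by
    intro x
    rw [hfl]
    exact mul_nonneg (mul_nonneg (Real.rpow_nonneg (hρ0 x) _) (sq_nonneg _)) (Real.exp_nonneg _)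
  have hfbnn : ∀ x, 0 ≤ fb x := by
    intro x
    rw [hfb]
    exact mul_nonneg (mul_nonneg (mul_nonneg (mul_self_nonneg _) (Real.rpow_nonneg (hρ0 x) _))
      (Real.exp_nonneg _)) (Real.exp_nonneg _)
  have hcexp : ∀ a : ℝ, Continuous (fun x => Real.exp (a * u x)) :=
    fun a => Real.continuous_exp.comp (continuous_const.mul hu.continuous)
  have hfpc : Continuous fp := by
    rw [hfp]
    exact hlapφ.add (continuous_const.mul (hGu.continuous.inner hGφ.continuous))
  have hfqqc : Continuous fqq := by
    rw [hfqq]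
    exact hlapρ.add (continuous_const.mul (hGu.continuous.inner hGρ.continuous))
  -- integrabilities
  have hIa : Integrable fa := by
    apply integrable_aux hUopen hK hφs
    · rw [hfa]
      exact ((continuousOn_rpow_comp hρc (α - 2)).mul
        (hGφ.continuous.norm.pow 2).continuousOn).mul (hcexp c).continuousOn
    · intro x hx; simp [hfa, hgrad0 x hx]
  have hIg : Integrable fg := by
    apply integrable_aux hUopen hK hφs
    · rw [hfg]
      exact (((hφ.continuous.continuousOn.mul (continuousOn_rpow_comp hρc (α - 3))).mul
        (hGρ.continuous.inner hGφ.continuous).continuousOn)).mul (hcexp c).continuousOn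
    · intro x hx; simp [hfg, hφ0 x hx]
  have hIm : Integrable fm := by
    apply integrable_aux hUopen hK hφs
    · rw [hfm]
      exact (((hφ.continuous.continuousOn.mul (continuousOn_rpow_comp hρc (α - 2))).mul
        hfpc.continuousOn)).mul (hcexp c).continuousOn
    · intro x hx; simp [hfm, hφ0 x hx]
  have hIb : Integrable fb := by
    apply integrable_aux hUopen hK hφs
    · rw [hfb]
      exact ((((hφ.continuous.continuousOn.mul hφ.continuous.continuousOn).mul
        (continuousOn_rpow_comp hρc (α - 4))).mul (hcexp (2 * (lam - mu))).continuousOn).mul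
        (hcexp c).continuousOn)
    · intro x hx; simp [hfb, hφ0 x hx]
  have hIq : Integrable fq := by
    apply integrable_aux hUopen hK hφs
    · rw [hfq]
      exact ((((hφ.continuous.continuousOn.mul hφ.continuous.continuousOn).mul
        (continuousOn_rpow_comp hρc (α - 3))).mul hfqqc.continuousOn).mul
        (hcexp c).continuousOn)
    · intro x hx; simp [hfq, hφ0 x hx]
  have hIl : Integrable fl := by
    apply integrable_aux hUopen hK hφs
    · rw [hfl]
      exact (((continuousOn_rpow_comp hρc α).mul (hfpc.pow 2).continuousOn)).mul
        (hcexp (c - 2 * (lam - mu))).continuousOn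
    · intro x hx; simp [hfl, hfp0 x hx]
  -- first divergence identity
  have hX1s : ContDiff ℝ 1
      (fun x => (φ x * (ρ x ^ (α - 2) * Real.exp (c * u x))) • gradient φ x) :=
    X_smooth hφ hρsm hu hGφ hφs (α - 2) c
  have hX1c : HasCompactSupport
      (fun x => (φ x * (ρ x ^ (α - 2) * Real.exp (c * u x))) • gradient φ x) :=
    X_supp hφc (α - 2) c
  have hdiv1 : ∀ x, divE (fun y => (φ y * (ρ y ^ (α - 2) * Real.exp (c * u y))) • gradient φ y) x
      = fa x + ((α - 2) * fg x + fm x) := by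
    intro x
    by_cases hx : ρ x ≠ 0
    · rw [divE_formula (hφd x) (hρd x) (hud x) (hGφd x) hx (α - 2) c]
      have e1 : fderiv ℝ φ x (gradient φ x) = ‖gradient φ x‖ ^ 2 := by
        rw [← inner_gradient_eq]
        exact real_inner_self_eq_norm_sq _
      have e2 : α - 2 - 1 = α - 3 := by ring
      rw [e1, e2]
      simp only [hfa, hfg, hfm, hfp]
      ring
    · push_neg at hx
      have hxs : x ∉ tsupport φ := fun h => (hφs h) hx
      have hz : divE (fun y => (φ y * (ρ y ^ (α - 2) * Real.exp (c * u y))) • gradient φ y) x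
          = 0 := by
        apply divE_of_eventually_zero
        filter_upwards [(isClosed_tsupport φ).isOpen_compl.mem_nhds hxs] with y hy
        rw [hφ0 y hy, zero_mul, zero_smul]
      rw [hz]
      simp [hfa, hfg, hfm, hφ0 x hxs, hgrad0 x hxs]
  have hint1 := integral_divE_eq_zero hX1s hX1c
  simp only [hdiv1] at hint1
  have hg1' : Integrable (fun x => (α - 2) * fg x + fm x)
      (volume : Measure (EuclideanSpace ℝ (Fin n))) := (hIg.const_mul (α - 2)).add hIm
  rw [integral_add hIa hg1', integral_add (hIg.const_mul (α - 2)) hIm,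
      integral_const_mul] at hint1
  -- second divergence identity
  have hψ2 : ContDiff ℝ (⊤ : ℕ∞) (fun y => φ y * φ y) := hφ.mul hφ
  have hψ2c : HasCompactSupport (fun y : EuclideanSpace ℝ (Fin n) => φ y * φ y) :=
    HasCompactSupport.intro hK (fun x hx => by rw [hφ0 x hx, zero_mul])
  have hψ2s : tsupport (fun y : EuclideanSpace ℝ (Fin n) => φ y * φ y) ⊆ {x | ρ x ≠ 0} :=
    subset_trans tsupport_mul_subset_left hφs
  have hX2s : ContDiff ℝ 1
      (fun x => (φ x * φ x * (ρ x ^ (α - 3) * Real.exp (c * u x))) • gradient ρ x) :=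
    X_smooth hψ2 hρsm hu hGρ hψ2s (α - 3) c
  have hX2c : HasCompactSupport
      (fun x => (φ x * φ x * (ρ x ^ (α - 3) * Real.exp (c * u x))) • gradient ρ x) :=
    X_supp hψ2c (α - 3) c
  have hnr : ∀ x, ρ x ≠ 0 →
      (inner ℝ (gradient ρ x) (gradient ρ x) : ℝ) = Real.exp (2 * (lam - mu) * u x) := by
    intro x hx
    have h := hρg x hx
    simp only [gradD, Vpow] at h
    rw [norm_smul, Real.norm_eq_abs, Real.abs_exp] at h
    have h2 : ‖gradient ρ x‖ = (Real.exp ((mu - lam) * u x))⁻¹ := eq_inv_of_mul_eq_one_right h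
    rw [real_inner_self_eq_norm_sq, h2, ← Real.exp_neg, pow_two, ← Real.exp_add]
    congr 1
    ring
  have hdiv2 : ∀ x,
      divE (fun y => (φ y * φ y * (ρ y ^ (α - 3) * Real.exp (c * u y))) • gradient ρ y) x
      = 2 * fg x + ((α - 3) * fb x + fq x) := by
    intro x
    by_cases hx : ρ x ≠ 0
    · rw [divE_formula (show DifferentiableAt ℝ (fun y => φ y * φ y) x from (hφd x).mul (hφd x)) (hρd x) (hud x) (hGρd x) hx (α - 3) c]
      have e1 : fderiv ℝ (fun y => φ y * φ y) x (gradient ρ x)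
          = 2 * (φ x * (inner ℝ (gradient ρ x) (gradient φ x) : ℝ)) := by
        rw [fderiv_fun_mul (hφd x) (hφd x)]
        simp only [ContinuousLinearMap.add_apply, ContinuousLinearMap.smul_apply, smul_eq_mul]
        rw [← inner_gradient_eq, real_inner_comm]
        ring
      have e2 : α - 3 - 1 = α - 4 := by ring
      rw [e1, e2, hnr x hx]
      simp only [hfg, hfb, hfq, hfqq]
      ring
    · push_neg at hx
      have hxs : x ∉ tsupport φ := fun h => (hφs h) hx
      have hz : divE (fun y => (φ y * φ y * (ρ y ^ (α - 3) * Real.exp (c * u y))) •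
          gradient ρ y) x = 0 := by
        apply divE_of_eventually_zero
        filter_upwards [(isClosed_tsupport φ).isOpen_compl.mem_nhds hxs] with y hy
        rw [hφ0 y hy, zero_mul, zero_mul, zero_smul]
      rw [hz]
      simp [hfg, hfb, hfq, hφ0 x hxs]
  have hint2 := integral_divE_eq_zero hX2s hX2c
  simp only [hdiv2] at hint2
  have hg2' : Integrable (fun x => (α - 3) * fb x + fq x)
      (volume : Measure (EuclideanSpace ℝ (Fin n))) := (hIb.const_mul (α - 3)).add hIq
  rw [integral_add (hIg.const_mul 2) hg2', integral_add (hIb.const_mul (α - 3)) hIq,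
      integral_const_mul, integral_const_mul] at hint2
  -- the pointwise curvature-type bound
  have hqq_le : ∀ x, ρ x ≠ 0 → fqq x ≤ C / ρ x * Real.exp (2 * (lam - mu) * u x) := by
    intro x hx
    have h := hΔ x hx
    simp only [lapD, Vpow] at h
    rw [← hc] at h
    have hkey : Real.exp ((lam - mu) * u x) * Real.exp ((mu - lam) * u x) = 1 := by
      rw [← Real.exp_add, show (lam - mu) * u x + (mu - lam) * u x = 0 from by ring]
      exact Real.exp_zero
    calc fqq x = Real.exp ((lam - mu) * u x) * (Real.exp ((mu - lam) * u x) * fqq x) := by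
          rw [← mul_assoc, hkey, one_mul]
      _ ≤ Real.exp ((lam - mu) * u x) * (C / ρ x * Real.exp ((lam - mu) * u x)) := by
          apply mul_le_mul_of_nonneg_left _ (Real.exp_nonneg _)
          rw [hfqq]
          exact h
      _ = C / ρ x * Real.exp (2 * (lam - mu) * u x) := by
          rw [show Real.exp ((lam - mu) * u x) * (C / ρ x * Real.exp ((lam - mu) * u x))
              = C / ρ x * (Real.exp ((lam - mu) * u x) * Real.exp ((lam - mu) * u x)) from by
            ring, ← Real.exp_add]
          congr 1
          ring
  have hqb : ∀ x, fq x ≤ C * fb x := by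
    intro x
    by_cases hxs : x ∈ tsupport φ
    · have hx : ρ x ≠ 0 := hφs hxs
      have h1 : 0 ≤ φ x * φ x * ρ x ^ (α - 3) * Real.exp (c * u x) :=
        mul_nonneg (mul_nonneg (mul_self_nonneg _) (Real.rpow_nonneg (hρ0 x) _))
          (Real.exp_nonneg _)
      have h2 := mul_le_mul_of_nonneg_left (hqq_le x hx) h1
      calc fq x = φ x * φ x * ρ x ^ (α - 3) * Real.exp (c * u x) * fqq x := by
            simp only [hfq]; ring
        _ ≤ φ x * φ x * ρ x ^ (α - 3) * Real.exp (c * u x) *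
            (C / ρ x * Real.exp (2 * (lam - mu) * u x)) := h2
        _ = C * fb x := by
            simp only [hfb]
            rw [show α - 4 = α - 3 - 1 from by ring, Real.rpow_sub_one hx]
            field_simp
    · simp [hfq, hfb, hφ0 x hxs]
  have hIqle : ∫ x, fq x ≤ C * ∫ x, fb x := by
    have h := integral_mono hIq (hIb.const_mul C) hqb
    rwa [integral_const_mul] at h
  -- pointwise AM-GM
  have hamgm : ∀ x, -fm x ≤ fl x / (4 * k) + k * fb x := by
    intro x
    by_cases hxs : x ∈ tsupport φ
    · have hx : ρ x ≠ 0 := hφs hxs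
      have hpos := hρpos x hx
      refine amgm (hflnn x) (hfbnn x) hkpos ?_
      have hr1 : ρ x ^ (α - 2) * ρ x ^ (α - 2) = ρ x ^ α * ρ x ^ (α - 4) := by
        rw [← Real.rpow_add hpos, ← Real.rpow_add hpos]
        ring_nf
      have he1 : Real.exp ((c - 2 * (lam - mu)) * u x) *
          (Real.exp (2 * (lam - mu) * u x) * Real.exp (c * u x))
          = Real.exp (c * u x) * Real.exp (c * u x) := by
        rw [← Real.exp_add, ← Real.exp_add, ← Real.exp_add]
        ring_nf
      simp only [hfm, hfl, hfb]
      calc (φ x * ρ x ^ (α - 2) * fp x * Real.exp (c * u x)) ^ 2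
          = (ρ x ^ (α - 2) * ρ x ^ (α - 2)) * (Real.exp (c * u x) * Real.exp (c * u x)) *
            (φ x * φ x * fp x ^ 2) := by ring
        _ = (ρ x ^ α * ρ x ^ (α - 4)) * (Real.exp ((c - 2 * (lam - mu)) * u x) *
            (Real.exp (2 * (lam - mu) * u x) * Real.exp (c * u x))) *
            (φ x * φ x * fp x ^ 2) := by rw [hr1, he1]
        _ = (ρ x ^ α * fp x ^ 2 * Real.exp ((c - 2 * (lam - mu)) * u x)) *
            (φ x * φ x * ρ x ^ (α - 4) * Real.exp (2 * (lam - mu) * u x) *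
              Real.exp (c * u x)) := by ring
    · have h1 : fm x = 0 := by simp [hfm, hφ0 x hxs]
      have h2 : fb x = 0 := by simp [hfb, hφ0 x hxs]
      rw [h1, h2]
      have h3 : 0 ≤ fl x / (4 * k) := div_nonneg (hflnn x) (by linarith)
      simp only [neg_zero, mul_zero]
      linarith
  have hImle : -∫ x, fm x ≤ (∫ x, fl x) / (4 * k) + k * ∫ x, fb x := by
    have hgi : Integrable (fun x => fl x / (4 * k) + k * fb x)
        (volume : Measure (EuclideanSpace ℝ (Fin n))) :=
      (hIl.div_const (4 * k)).add (hIb.const_mul k)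
    have hni : Integrable (fun x => -fm x)
        (volume : Measure (EuclideanSpace ℝ (Fin n))) := hIm.neg
    have h := integral_mono hni hgi hamgm
    rwa [integral_neg, integral_add (hIl.div_const _) (hIb.const_mul _), integral_div,
      integral_const_mul] at h
  have hIb0 : 0 ≤ ∫ x, fb x := integral_nonneg hfbnn
  -- rewrite the goal
  have hLrw : (∫ x, ρ x ^ α * (lapD lam mu u φ x) ^ 2 * Vpow u (τ + mu - lam) x)
      = ∫ x, fl x := by
    apply integral_congr_ae
    apply Filter.Eventually.of_forall
    intro x
    simp only [lapD, Vpow, hfl, hfp]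
    rw [← hc, exp_arrange]
    rw [show 2 * ((mu - lam) * u x) + (τ + mu - lam) * u x = (c - 2 * (lam - mu)) * u x from by
      rw [hτ, hc]; ring]
  have hRrw : (∫ x, ρ x ^ (α - 2) * ‖gradD lam mu u φ x‖ ^ 2 * Vpow u (τ + lam - mu) x)
      = ∫ x, fa x := by
    apply integral_congr_ae
    apply Filter.Eventually.of_forall
    intro x
    simp only [gradD, Vpow, hfa]
    rw [norm_smul, Real.norm_eq_abs, Real.abs_exp, exp_arrange]
    rw [show 2 * ((mu - lam) * u x) + (τ + lam - mu) * u x = c * u x from by rw [hτ, hc]; ring]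
  rw [ge_iff_le, hLrw, hRrw]
  -- final linear arithmetic
  have hg2 : (3 - α - C) / 2 * (∫ x, fb x) ≤ ∫ x, fg x := by linarith
  have hmul := mul_le_mul_of_nonneg_left hg2 (by linarith : (0:ℝ) ≤ α - 2)
  have hkb : (α - 2) * ((3 - α - C) / 2 * (∫ x, fb x)) = k * (∫ x, fb x) := by rw [hk]; ring
  have hIa_le : (∫ x, fa x) ≤ (∫ x, fl x) / (4 * k) := by linarith
  have h4k : (0:ℝ) < 4 * k := by linarith
  have hfin := (le_div_iff₀ h4k).mp hIa_le
  have hkk : 2 * (α - 2) * (3 - α - C) * (∫ x, fa x) = (∫ x, fa x) * (4 * k) := by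
    rw [hk]; ring
  linarith
end
end

section
/- (Theorem 4.2(ii), Euclidean model: Rellich-type inequality connecting first and second order derivatives.) Let C > 1 and (7-C)/3 < α < 2. Assume Δ^D ρ ≥ (C/ρ)·V^{λ-μ} pointwise on ℝⁿ \ ρ^{-1}{0}. Then for every φ ∈ C_c^∞(ℝⁿ \ ρ^{-1}{0}) one has ∫_{ℝⁿ} ρ^α (Δ^D φ)² V^{τ+μ-λ} dx ≥ ((C-α+1)²/4) ∫_{ℝⁿ} ρ^{α-2} |∇^D φ|² V^{τ+λ-μ} dx. -/
open MeasureTheory Real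

noncomputable section

namespace RellichAux

open Set Filter Topology

variable {n : ℕ}

local notation "E" => EuclideanSpace ℝ (Fin n)

lemma inner_gradient_apply (f : E → ℝ) (x v : E) :
    (inner ℝ (gradient f x) v : ℝ) = fderiv ℝ f x v :=
  InnerProductSpace.toDual_symm_apply

lemma clm_sum_single (L : (EuclideanSpace ℝ (Fin n)) →L[ℝ] ℝ) (v : E) :
    ∑ i, L (EuclideanSpace.single i 1) * v i = L v := by
  have hv : ∑ i, v i • (EuclideanSpace.single i (1:ℝ)) = v := by
    have := (EuclideanSpace.basisFun (Fin n) ℝ).sum_repr v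
    simpa [EuclideanSpace.basisFun_apply, EuclideanSpace.basisFun_repr] using this
  conv_rhs => rw [← hv]
  rw [map_sum]
  congr 1; ext i
  simp [mul_comm]

lemma gradient_contDiff {f : E → ℝ} (hf : ContDiff ℝ (⊤ : ℕ∞) f) :
    ContDiff ℝ (⊤ : ℕ∞) (fun x => gradient f x) := by
  have h1 : ContDiff ℝ (⊤ : ℕ∞) (fun x => fderiv ℝ f x) := hf.fderiv_right (by simp)
  exact ((InnerProductSpace.toDual ℝ E).symm.contDiff).comp h1

lemma gradient_eq_zero_of_nmem {f : E → ℝ} {x : E} (hx : x ∉ tsupport f) :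
    gradient f x = 0 := by
  have : fderiv ℝ f x = 0 := by
    by_contra h
    exact hx (support_fderiv_subset ℝ (f := f) h)
  simp [gradient, this]

lemma divE_congr_zero {X : E → E} {x : E} (h : ∀ᶠ y in 𝓝 x, X y = 0) : divE X x = 0 := by
  have h' : X =ᶠ[𝓝 x] (fun _ => (0 : E)) := h
  have : fderiv ℝ X x = fderiv ℝ (fun _ => (0:E)) x := h'.fderiv_eq
  simp [divE, this]

lemma lapE_eq_zero_of_nmem {f : E → ℝ} {x : E} (hx : x ∉ tsupport f) : lapE f x = 0 := by
  apply divE_congr_zero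
  have : ∀ᶠ y in 𝓝 x, y ∉ tsupport f :=
    (isClosed_tsupport f).isOpen_compl.mem_nhds hx
  exact this.mono fun y hy => gradient_eq_zero_of_nmem hy

lemma lapD_eq_zero_of_nmem (lam mu : ℝ) (u : E → ℝ) {f : E → ℝ} {x : E}
    (hx : x ∉ tsupport f) : lapD lam mu u f x = 0 := by
  simp [lapD, lapE_eq_zero_of_nmem hx, gradient_eq_zero_of_nmem hx]

lemma continuous_divE {X : E → E} (hX : ContDiff ℝ (⊤ : ℕ∞) X) : Continuous (divE X) := by
  apply continuous_finset_sum
  intro i _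
  have h1 : Continuous fun x => fderiv ℝ X x (EuclideanSpace.single i 1) :=
    (hX.continuous_fderiv (by simp)).clm_apply continuous_const
  exact (by fun_prop : Continuous fun v : E => v i).comp h1

lemma continuous_lapD (lam mu : ℝ) {u f : E → ℝ} (hu : ContDiff ℝ (⊤ : ℕ∞) u)
    (hf : ContDiff ℝ (⊤ : ℕ∞) f) : Continuous (lapD lam mu u f) := by
  unfold lapD
  have h1 : Continuous (lapE f) := continuous_divE (gradient_contDiff hf)
  have h2 : Continuous fun x => (inner ℝ (gradient u x) (gradient f x) : ℝ) :=
    (gradient_contDiff hu).continuous.inner (gradient_contDiff hf).continuous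
  have h3 : Continuous (Vpow u (mu - lam)) := by
    unfold Vpow
    exact Real.continuous_exp.comp (continuous_const.mul hu.continuous)
  exact h3.mul (h1.add (continuous_const.mul h2))

lemma divE_smul {w : E → ℝ} {Z : E → E} {x : E}
    (hw : DifferentiableAt ℝ w x) (hZ : DifferentiableAt ℝ Z x) :
    divE (fun y => w y • Z y) x = fderiv ℝ w x (Z x) + w x * divE Z x := by
  unfold divE
  rw [fderiv_fun_smul hw hZ]
  simp only [ContinuousLinearMap.add_apply, ContinuousLinearMap.smul_apply,
    ContinuousLinearMap.smulRight_apply, PiLp.add_apply, PiLp.smul_apply, smul_eq_mul]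
  rw [Finset.sum_add_distrib, ← Finset.mul_sum]
  rw [clm_sum_single]
  ring

lemma integral_fderiv_apply_eq_zero {g : E → ℝ} (hg : ContDiff ℝ (⊤ : ℕ∞) g)
    (hgc : HasCompactSupport g) (v : E) : ∫ x, fderiv ℝ g x v = 0 := by
  obtain ⟨D, hD⟩ := hg.lipschitzWith_of_hasCompactSupport hgc (by simp)
  have h1 : LipschitzWith 0 (fun _ : E => (1:ℝ)) := LipschitzWith.const 1
  have key := h1.integral_lineDeriv_mul_eq (μ := volume) hD hgc v
  have hL : ∀ x : E, lineDeriv ℝ (fun _ : E => (1:ℝ)) x v = 0 := by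
    intro x
    have : DifferentiableAt ℝ (fun _ : E => (1:ℝ)) x := differentiableAt_const 1
    rw [this.lineDeriv_eq_fderiv]; simp
  have hR : ∀ x : E, lineDeriv ℝ g x (-v) = - fderiv ℝ g x v := by
    intro x
    have hd : DifferentiableAt ℝ g x := (hg.differentiable (by simp)) x
    rw [hd.lineDeriv_eq_fderiv]; simp
  simp only [hL, zero_mul, integral_zero, hR, mul_one] at key
  have := key.symm
  rwa [integral_neg, neg_eq_zero] at this

lemma integral_divE_eq_zero {X : E → E} (hX : ContDiff ℝ (⊤ : ℕ∞) X)
    (hXc : HasCompactSupport X) : ∫ x, divE X x = 0 := by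
  have hcomp : ∀ i : Fin n, ContDiff ℝ (⊤ : ℕ∞) (fun y : E => X y i) := by
    intro i
    exact (EuclideanSpace.proj i).contDiff.comp hX
  have hder : ∀ (i : Fin n) (x : E) (v : E),
      fderiv ℝ (fun y : E => X y i) x v = fderiv ℝ X x v i := by
    intro i x v
    have hdX : DifferentiableAt ℝ X x := (hX.differentiable (by simp)) x
    have := ((EuclideanSpace.proj (𝕜 := ℝ) i).hasFDerivAt.comp x hdX.hasFDerivAt).fderiv
    rw [show (fun y : E => X y i) = (EuclideanSpace.proj (𝕜 := ℝ) i) ∘ X from rfl, this]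
    rfl
  have hint : ∀ i : Fin n,
      Integrable (fun x : E => fderiv ℝ X x (EuclideanSpace.single i 1) i) := by
    intro i
    have hc : Continuous fun x : E => fderiv ℝ X x (EuclideanSpace.single i 1) i :=
      (by fun_prop : Continuous fun v : E => v i).comp ((hX.continuous_fderiv (by simp)).clm_apply continuous_const)
    apply hc.integrable_of_hasCompactSupport
    apply hXc.mono'
    intro x hx
    simp only [Function.mem_support, Ne] at hx
    by_contra hxs
    have : fderiv ℝ X x = 0 := by
      by_contra h
      exact hxs (support_fderiv_subset ℝ (f := X) h)
    simp [this] at hx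
  unfold divE
  rw [integral_finset_sum _ (fun i _ => hint i)]
  apply Finset.sum_eq_zero
  intro i _
  have : ∀ x : E, fderiv ℝ X x (EuclideanSpace.single i 1) i
      = fderiv ℝ (fun y : E => X y i) x (EuclideanSpace.single i 1) := fun x => (hder i x _).symm
  simp only [this]
  exact integral_fderiv_apply_eq_zero (hcomp i) (hXc.comp_left (g := fun w : E => w i) rfl) _

lemma contDiff_vpow {u : E → ℝ} (hu : ContDiff ℝ (⊤ : ℕ∞) u) (s : ℝ) :
    ContDiff ℝ (⊤ : ℕ∞) (Vpow u s) :=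
  Real.contDiff_exp.comp (contDiff_const.mul hu)

lemma vpow_pos (u : E → ℝ) (s : ℝ) (x : E) : 0 < Vpow u s x := Real.exp_pos _

lemma vpow_mul (u : E → ℝ) (a b : ℝ) (x : E) :
    Vpow u a x * Vpow u b x = Vpow u (a + b) x := by
  rw [Vpow, Vpow, Vpow, ← Real.exp_add]; congr 1; ring

lemma hasFDerivAt_vpow {u : E → ℝ} (hu : ContDiff ℝ (⊤ : ℕ∞) u) (s : ℝ) (x : E) :
    HasFDerivAt (Vpow u s) ((s * Vpow u s x) • fderiv ℝ u x) x := by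
  have hud : HasFDerivAt u (fderiv ℝ u x) x := ((hu.differentiable (by simp)) x).hasFDerivAt
  have hcu : HasFDerivAt (fun y => s * u y) (s • fderiv ℝ u x) x := hud.const_mul s
  have hh := hcu.exp
  have : Real.exp (s * u x) • s • fderiv ℝ u x = (s * Vpow u s x) • fderiv ℝ u x := by
    rw [smul_smul, Vpow, mul_comm]
  rw [this] at hh
  exact hh

theorem master_ibp (u ρ : E → ℝ) (hu : ContDiff ℝ (⊤ : ℕ∞) u) (hρsm : ContDiff ℝ (⊤ : ℕ∞) ρ)
    (lam mu s c : ℝ) (f h : E → ℝ) (hf : ContDiff ℝ (⊤ : ℕ∞) f) (hh : ContDiff ℝ (⊤ : ℕ∞) h)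
    (hfc : HasCompactSupport f) (hfS : tsupport f ⊆ {x | ρ x ≠ 0})
    (hc : 2 * mu + (n : ℝ) * lam = c) :
    ∫ x, (s * (ρ x ^ (s-1) * (f x * Vpow u c x * (inner ℝ (gradient ρ x) (gradient h x) : ℝ)))
      + ρ x ^ s * (Vpow u c x * (inner ℝ (gradient f x) (gradient h x) : ℝ))
      + ρ x ^ s * (f x * Vpow u (c + lam - mu) x * lapD lam mu u h x)) = 0 := by
  set X : E → E := fun y => (ρ y ^ s * Vpow u c y * f y) • gradient h y with hX
  have hgradh : ContDiff ℝ (⊤ : ℕ∞) (fun x : E => gradient h x) := gradient_contDiff hh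
  have hXsm : ContDiff ℝ (⊤ : ℕ∞) X := by
    rw [contDiff_iff_contDiffAt]
    intro x
    by_cases hρx : ρ x ≠ 0
    · have h1 : ContDiffAt ℝ (⊤ : ℕ∞) (fun y => ρ y ^ s) x :=
        hρsm.contDiffAt.rpow_const_of_ne hρx
      exact ((h1.mul (contDiff_vpow hu c).contDiffAt).mul hf.contDiffAt).smul hgradh.contDiffAt
    · push_neg at hρx
      have hxf : x ∉ tsupport f := fun hmem => (hfS hmem) hρx
      have hev : ∀ᶠ y in 𝓝 x, X y = 0 := by
        filter_upwards [(isClosed_tsupport f).isOpen_compl.mem_nhds hxf] with y hy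
        have : f y = 0 := image_eq_zero_of_notMem_tsupport hy
        simp [hX, this]
      exact contDiffAt_const.congr_of_eventuallyEq (hev.mono fun y hy => hy)
  have hXc : HasCompactSupport X := by
    apply hfc.mono'
    intro x hx
    by_contra hxs
    have : f x = 0 := image_eq_zero_of_notMem_tsupport hxs
    simp [hX, this] at hx
  have claim : ∀ x, divE X x =
      s * (ρ x ^ (s-1) * (f x * Vpow u c x * (inner ℝ (gradient ρ x) (gradient h x) : ℝ)))
      + ρ x ^ s * (Vpow u c x * (inner ℝ (gradient f x) (gradient h x) : ℝ))
      + ρ x ^ s * (f x * Vpow u (c + lam - mu) x * lapD lam mu u h x) := by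
    intro x
    by_cases hρx : ρ x ≠ 0
    · have hρd : HasFDerivAt ρ (fderiv ℝ ρ x) x := ((hρsm.differentiable (by simp)) x).hasFDerivAt
      have hfd : HasFDerivAt f (fderiv ℝ f x) x := ((hf.differentiable (by simp)) x).hasFDerivAt
      have h1 : HasFDerivAt (fun y => ρ y ^ s) ((s * ρ x ^ (s-1)) • fderiv ℝ ρ x) x :=
        hρd.rpow_const (Or.inl hρx)
      have h2 := hasFDerivAt_vpow hu c x
      have hw : HasFDerivAt (fun y => ρ y ^ s * Vpow u c y * f y)
          ((ρ x ^ s * Vpow u c x) • fderiv ℝ f x +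
            f x • (ρ x ^ s • ((c * Vpow u c x) • fderiv ℝ u x) +
              Vpow u c x • ((s * ρ x ^ (s-1)) • fderiv ℝ ρ x))) x := (h1.mul h2).mul hfd
      have hdiv := divE_smul (w := fun y => ρ y ^ s * Vpow u c y * f y)
        (Z := fun y => gradient h y) hw.differentiableAt ((hgradh.differentiable (by simp)) x)
      have hthis : divE X x = fderiv ℝ (fun y => ρ y ^ s * Vpow u c y * f y) x (gradient h x)
          + (ρ x ^ s * Vpow u c x * f x) * lapE h x := hdiv
      rw [hthis, hw.fderiv]
      simp only [ContinuousLinearMap.add_apply, ContinuousLinearMap.coe_smul',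
        Pi.smul_apply, smul_eq_mul]
      rw [← inner_gradient_apply f x, ← inner_gradient_apply u x, ← inner_gradient_apply ρ x]
      have hV : Vpow u (c + lam - mu) x * Vpow u (mu - lam) x = Vpow u c x := by
        rw [vpow_mul]; congr 1; ring
      rw [lapD, hc]
      linear_combination (ρ x ^ s * f x *
        (lapE h x + c * (inner ℝ (gradient u x) (gradient h x) : ℝ))) * hV.symm
    · push_neg at hρx
      have hxf : x ∉ tsupport f := fun hmem => (hfS hmem) hρx
      have hdz : divE X x = 0 := by
        apply divE_congr_zero
        filter_upwards [(isClosed_tsupport f).isOpen_compl.mem_nhds hxf] with y hy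
        have : f y = 0 := image_eq_zero_of_notMem_tsupport hy
        simp [hX, this]
      have hf0 : f x = 0 := image_eq_zero_of_notMem_tsupport hxf
      have hgf0 : gradient f x = 0 := gradient_eq_zero_of_nmem hxf
      simp [hdz, hf0, hgf0]
  have h0 := integral_divE_eq_zero hXsm hXc
  simp only [claim] at h0
  exact h0

lemma integrable_pattern {ρ φ : E → ℝ} (hρ : Continuous ρ)
    (hφc : HasCompactSupport φ) (hφS : tsupport φ ⊆ {x | ρ x ≠ 0})
    (s : ℝ) {H : E → ℝ} (hH : Continuous H) (hHs : Function.support H ⊆ tsupport φ) :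
    Integrable (fun x => ρ x ^ s * H x) volume := by
  have hcont : Continuous (fun x => ρ x ^ s * H x) := by
    rw [continuous_iff_continuousAt]
    intro x
    by_cases hρx : ρ x ≠ 0
    · exact (((Real.continuousAt_rpow_const (ρ x) s (Or.inl hρx)).comp
        hρ.continuousAt)).mul hH.continuousAt
    · push_neg at hρx
      have hxf : x ∉ tsupport φ := fun hmem => (hφS hmem) hρx
      have hev : ∀ᶠ y in nhds x, ρ y ^ s * H y = 0 := by
        filter_upwards [(isClosed_tsupport φ).isOpen_compl.mem_nhds hxf] with y hy
        have : H y = 0 := by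
          by_contra h
          exact hy (hHs h)
        simp [this]
      exact Filter.EventuallyEq.continuousAt (by filter_upwards [hev] with y hy using hy)
  apply hcont.integrable_of_hasCompactSupport
  apply hφc.mono'
  intro x hx
  have hx' : ρ x ^ s * H x ≠ 0 := hx
  have hHx : H x ≠ 0 := right_ne_zero_of_mul hx'
  exact hHs hHx

end RellichAux

open RellichAux Set Filter Topology

set_option maxHeartbeats 2000000 in
theorem stmt10 {n : ℕ} (hn : 1 ≤ n) (lam mu : ℝ)
    (u : EuclideanSpace ℝ (Fin n) → ℝ) (hu : ContDiff ℝ (⊤ : ℕ∞) u)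
    (τ : ℝ) (hτ : τ = ((n : ℝ) + 1) * lam + mu)
    (ρ : EuclideanSpace ℝ (Fin n) → ℝ) (hρsm : ContDiff ℝ (⊤ : ℕ∞) ρ)
    (hρ0 : ∀ x, 0 ≤ ρ x)
    (hρg : ∀ x, ρ x ≠ 0 → ‖gradD lam mu u ρ x‖ = 1)
    (C α : ℝ) (hC : 1 < C) (hα1 : (7 - C) / 3 < α) (hα2 : α < 2)
    (hΔ : ∀ x, ρ x ≠ 0 → (C / ρ x) * Vpow u (lam - mu) x ≤ lapD lam mu u ρ x)
    (φ : EuclideanSpace ℝ (Fin n) → ℝ) (hφ : ContDiff ℝ (⊤ : ℕ∞) φ)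
    (hφc : HasCompactSupport φ) (hφs : tsupport φ ⊆ {x | ρ x ≠ 0}) :
    ∫ x, ρ x ^ α * (lapD lam mu u φ x) ^ 2 * Vpow u (τ + mu - lam) x ≥
      ((C - α + 1) ^ 2 / 4) *
        ∫ x, ρ x ^ (α - 2) * ‖gradD lam mu u φ x‖ ^ 2 * Vpow u (τ + lam - mu) x := by
  classical
  -- basic constants
  have hβ : (0:ℝ) < C + α - 3 := by nlinarith
  set β : ℝ := C + α - 3 with hβdef
  set κ : ℝ := (2 - α) * β / 2 with hκdef
  have hκ : 0 < κ := by
    apply div_pos _ two_pos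
    exact mul_pos (by linarith) hβ
  have h4κ : 4 * κ ≤ β ^ 2 := by
    have h37 : 7 - C ≤ 3 * α := by nlinarith
    have : 2 * (2 - α) ≤ β := by simp only [hβdef]; linarith
    nlinarith
  set ε : ℝ := 4 / (β ^ 2 + 4 * κ) with hεdef
  have hεpos : 0 < ε := by positivity
  have hβne : β ≠ 0 := ne_of_gt hβ
  have hεne : ε ≠ 0 := ne_of_gt hεpos
  clear_value β κ ε
  have hc : 2 * mu + (n : ℝ) * lam = τ + mu - lam := by rw [hτ]; ring
  -- pointwise functions
  set gI : EuclideanSpace ℝ (Fin n) → ℝ := fun x =>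
    ρ x ^ (α-2) * (‖gradD lam mu u φ x‖^2 * Vpow u (τ+lam-mu) x) with hgI
  set gL : EuclideanSpace ℝ (Fin n) → ℝ := fun x =>
    ρ x ^ α * ((lapD lam mu u φ x)^2 * Vpow u (τ+mu-lam) x) with hgL
  set gJ : EuclideanSpace ℝ (Fin n) → ℝ := fun x =>
    ρ x ^ (α-4) * ((φ x)^2 * Vpow u (τ+lam-mu) x) with hgJ
  set gA : EuclideanSpace ℝ (Fin n) → ℝ := fun x =>
    ρ x ^ (α-2) * (φ x * Vpow u τ x * lapD lam mu u φ x) with hgA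
  set gT : EuclideanSpace ℝ (Fin n) → ℝ := fun x =>
    ρ x ^ (α-3) * (φ x * Vpow u (τ+mu-lam) x *
      (inner ℝ (gradient ρ x) (gradient φ x) : ℝ)) with hgT
  set gD : EuclideanSpace ℝ (Fin n) → ℝ := fun x =>
    ρ x ^ (α-3) * ((φ x)^2 * Vpow u τ x * lapD lam mu u ρ x) with hgD
  -- continuity/support facts
  have hgradφc : Continuous (fun x : EuclideanSpace ℝ (Fin n) => gradient φ x) := (gradient_contDiff hφ).continuous
  have hgradρc : Continuous (fun x : EuclideanSpace ℝ (Fin n) => gradient ρ x) := (gradient_contDiff hρsm).continuous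
  have hlapDφc : Continuous (lapD lam mu u φ) := continuous_lapD lam mu hu hφ
  have hlapDρc : Continuous (lapD lam mu u ρ) := continuous_lapD lam mu hu hρsm
  have hVc : ∀ s : ℝ, Continuous (Vpow u s) := fun s => (contDiff_vpow hu s).continuous
  have hgradD_supp : ∀ x, x ∉ tsupport φ → gradD lam mu u φ x = 0 := by
    intro x hx
    simp [gradD, gradient_eq_zero_of_nmem hx]
  have hφ0 : ∀ x, x ∉ tsupport φ → φ x = 0 := fun x hx => image_eq_zero_of_notMem_tsupport hx
  -- integrability
  have hIint : Integrable gI := by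
    rw [hgI]
    apply integrable_pattern hρsm.continuous hφc hφs (α-2)
      (H := fun x => ‖gradD lam mu u φ x‖^2 * Vpow u (τ+lam-mu) x)
    · exact (((hVc (mu-lam)).smul hgradφc).norm.pow 2).mul (hVc _)
    · intro x hx
      by_contra hxs
      simp [Function.mem_support, hgradD_supp x hxs] at hx
  have hLint : Integrable gL := by
    rw [hgL]
    apply integrable_pattern hρsm.continuous hφc hφs α
      (H := fun x => (lapD lam mu u φ x)^2 * Vpow u (τ+mu-lam) x)
    · exact (hlapDφc.pow 2).mul (hVc _)
    · intro x hx
      by_contra hxs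
      simp [Function.mem_support, lapD_eq_zero_of_nmem lam mu u hxs] at hx
  have hJint : Integrable gJ := by
    rw [hgJ]
    apply integrable_pattern hρsm.continuous hφc hφs (α-4)
      (H := fun x => (φ x)^2 * Vpow u (τ+lam-mu) x)
    · exact (hφ.continuous.pow 2).mul (hVc _)
    · intro x hx
      by_contra hxs
      simp [Function.mem_support, hφ0 x hxs] at hx
  have hAint : Integrable gA := by
    rw [hgA]
    apply integrable_pattern hρsm.continuous hφc hφs (α-2)
      (H := fun x => φ x * Vpow u τ x * lapD lam mu u φ x)
    · exact (hφ.continuous.mul (hVc _)).mul hlapDφc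
    · intro x hx
      by_contra hxs
      simp [Function.mem_support, hφ0 x hxs] at hx
  have hTint : Integrable gT := by
    rw [hgT]
    apply integrable_pattern hρsm.continuous hφc hφs (α-3)
      (H := fun x => φ x * Vpow u (τ+mu-lam) x * (inner ℝ (gradient ρ x) (gradient φ x) : ℝ))
    · exact (hφ.continuous.mul (hVc _)).mul (hgradρc.inner hgradφc)
    · intro x hx
      by_contra hxs
      simp [Function.mem_support, hφ0 x hxs] at hx
  have hDint : Integrable gD := by
    rw [hgD]
    apply integrable_pattern hρsm.continuous hφc hφs (α-3)
      (H := fun x => (φ x)^2 * Vpow u τ x * lapD lam mu u ρ x)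
    · exact ((hφ.continuous.pow 2).mul (hVc _)).mul hlapDρc
    · intro x hx
      by_contra hxs
      simp [Function.mem_support, hφ0 x hxs] at hx
  -- pointwise nonnegativity
  have hgI0 : ∀ x, 0 ≤ gI x := by
    intro x
    simp only [hgI]
    exact mul_nonneg (Real.rpow_nonneg (hρ0 x) _)
      (mul_nonneg (sq_nonneg _) (vpow_pos u _ x).le)
  have hgL0 : ∀ x, 0 ≤ gL x := by
    intro x
    simp only [hgL]
    exact mul_nonneg (Real.rpow_nonneg (hρ0 x) _)
      (mul_nonneg (sq_nonneg _) (vpow_pos u _ x).le)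
  have hgJ0 : ∀ x, 0 ≤ gJ x := by
    intro x
    simp only [hgJ]
    exact mul_nonneg (Real.rpow_nonneg (hρ0 x) _)
      (mul_nonneg (sq_nonneg _) (vpow_pos u _ x).le)
  -- norm of gradient of ρ
  have hnr : ∀ x : EuclideanSpace ℝ (Fin n), ρ x ≠ 0 → ‖gradient ρ x‖ = Vpow u (lam-mu) x := by
    intro x hx
    have h1 := hρg x hx
    rw [gradD, norm_smul, Real.norm_eq_abs, abs_of_pos (vpow_pos u _ x)] at h1
    have h2 : Vpow u (mu-lam) x * Vpow u (lam-mu) x = 1 := by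
      rw [vpow_mul, show mu - lam + (lam - mu) = 0 from by ring]
      simp [Vpow]
    exact mul_left_cancel₀ (ne_of_gt (vpow_pos u (mu-lam) x)) (h1.trans h2.symm)
  -- square of gradD norm identity
  have hGsq : ∀ x, ‖gradD lam mu u φ x‖^2 * Vpow u (τ+lam-mu) x
      = Vpow u (τ+mu-lam) x * (inner ℝ (gradient φ x) (gradient φ x) : ℝ) := by
    intro x
    rw [gradD, norm_smul, Real.norm_eq_abs, abs_of_pos (vpow_pos u _ x), mul_pow,
      real_inner_self_eq_norm_sq]
    have hh : Vpow u (mu-lam) x ^ 2 * Vpow u (τ+lam-mu) x = Vpow u (τ+mu-lam) x := by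
      rw [sq, mul_assoc, vpow_mul, vpow_mul,
        show mu - lam + (mu - lam + (τ+lam-mu)) = τ+mu-lam from by ring]
    linear_combination ‖gradient φ x‖^2 * hh
  -- first integration by parts
  have inst1 := master_ibp u ρ hu hρsm lam mu (α-2) (τ+mu-lam) φ φ hφ hφ hφc hφs hc
  have e1 : (∫ x, gI x) + (∫ x, gA x) + (α-2) * (∫ x, gT x) = 0 := by
    have hpt : ∀ x, gI x + gA x + (α-2) * gT x
        = (α-2) * (ρ x ^ ((α-2)-1) * (φ x * Vpow u (τ+mu-lam) x *
            (inner ℝ (gradient ρ x) (gradient φ x) : ℝ)))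
          + ρ x ^ (α-2) * (Vpow u (τ+mu-lam) x *
            (inner ℝ (gradient φ x) (gradient φ x) : ℝ))
          + ρ x ^ (α-2) * (φ x * Vpow u ((τ+mu-lam) + lam - mu) x * lapD lam mu u φ x) := by
      intro x
      simp only [hgI, hgA, hgT]
      rw [show (α-2)-1 = α-3 from by ring, show (τ+mu-lam)+lam-mu = τ from by ring]
      linear_combination (ρ x ^ (α-2)) * hGsq x
    have hsum : ∫ x, (gI x + gA x + (α-2) * gT x) = 0 := by
      rw [integral_congr_ae (ae_of_all _ hpt)]
      exact inst1
    have hint2 : Integrable (fun x => gI x + gA x) := hIint.add hAint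
    have hint3 : Integrable (fun x => (α-2) * gT x) := hTint.const_mul _
    rwa [integral_add hint2 hint3, integral_add hIint hAint, integral_const_mul] at hsum
  -- second integration by parts
  have hf2sm : ContDiff ℝ (⊤ : ℕ∞) (fun x : EuclideanSpace ℝ (Fin n) => φ x ^ 2) := hφ.pow 2
  have hf2c : HasCompactSupport (fun x : EuclideanSpace ℝ (Fin n) => φ x ^ 2) := by
    have : (fun x : EuclideanSpace ℝ (Fin n) => φ x ^ 2) = φ * φ := by
      funext x; simp [sq]
    rw [this]
    exact hφc.mul_right
  have hsupp2 : tsupport (fun x : EuclideanSpace ℝ (Fin n) => φ x ^ 2) ⊆ tsupport φ := by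
    apply closure_mono
    intro x hx
    simp only [Function.mem_support] at hx ⊢
    intro h0
    exact hx (by simp [h0])
  have hgrad2 : ∀ x, gradient (fun y : EuclideanSpace ℝ (Fin n) => φ y ^ 2) x
      = (2 * φ x) • gradient φ x := by
    intro x
    have h1 : DifferentiableAt ℝ φ x := hφ.differentiable (by simp) x
    have heq : (fun y : EuclideanSpace ℝ (Fin n) => φ y ^ 2) = fun y => φ y * φ y := by
      funext y; ring
    have hfd : fderiv ℝ (fun y : EuclideanSpace ℝ (Fin n) => φ y ^ 2) x
        = (2 * φ x) • fderiv ℝ φ x := by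
      rw [heq, fderiv_fun_mul h1 h1, two_mul, add_smul]
    rw [gradient, hfd, _root_.map_smul, gradient]
  have hiprr : ∀ x, φ x ^ 2 * Vpow u (τ+mu-lam) x *
      (inner ℝ (gradient ρ x) (gradient ρ x) : ℝ)
      = φ x ^ 2 * Vpow u (τ+lam-mu) x := by
    intro x
    by_cases hx : ρ x ≠ 0
    · rw [real_inner_self_eq_norm_sq, hnr x hx]
      have hh : Vpow u (τ+mu-lam) x * Vpow u (lam-mu) x ^ 2 = Vpow u (τ+lam-mu) x := by
        rw [sq, ← mul_assoc, vpow_mul, vpow_mul,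
          show τ + mu - lam + (lam - mu) + (lam - mu) = τ+lam-mu from by ring]
      linear_combination (φ x ^ 2) * hh
    · push_neg at hx
      have hxt : x ∉ tsupport φ := fun hmem => (hφs hmem) hx
      simp [hφ0 x hxt]
  have inst2 := master_ibp u ρ hu hρsm lam mu (α-3) (τ+mu-lam)
    (fun x => φ x ^ 2) ρ hf2sm hρsm hf2c (hsupp2.trans hφs) hc
  have e2 : 2 * (∫ x, gT x) + (α-3) * (∫ x, gJ x) + (∫ x, gD x) = 0 := by
    have hpt : ∀ x, 2 * gT x + (α-3) * gJ x + gD x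
        = (α-3) * (ρ x ^ ((α-3)-1) * (φ x ^ 2 * Vpow u (τ+mu-lam) x *
            (inner ℝ (gradient ρ x) (gradient ρ x) : ℝ)))
          + ρ x ^ (α-3) * (Vpow u (τ+mu-lam) x *
            (inner ℝ (gradient (fun y => φ y ^ 2) x) (gradient ρ x) : ℝ))
          + ρ x ^ (α-3) * (φ x ^ 2 * Vpow u ((τ+mu-lam) + lam - mu) x * lapD lam mu u ρ x) := by
      intro x
      simp only [hgT, hgJ, hgD]
      rw [show (α-3)-1 = α-4 from by ring, show (τ+mu-lam)+lam-mu = τ from by ring,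
        hgrad2 x, real_inner_smul_left]
      have hcomm : (inner ℝ (gradient ρ x) (gradient φ x) : ℝ)
          = (inner ℝ (gradient φ x) (gradient ρ x) : ℝ) := real_inner_comm _ _
      linear_combination (3-α) * ρ x ^ (α-4) * hiprr x
        + 2 * ρ x ^ (α-3) * φ x * Vpow u (τ+mu-lam) x * hcomm
    have hsum : ∫ x, (2 * gT x + (α-3) * gJ x + gD x) = 0 := by
      rw [integral_congr_ae (ae_of_all _ hpt)]
      exact inst2
    have hint1 : Integrable (fun x => 2 * gT x) := hTint.const_mul 2
    have hint4 : Integrable (fun x => (α-3) * gJ x) := hJint.const_mul _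
    have hint12 : Integrable (fun x => 2 * gT x + (α-3) * gJ x) := hint1.add hint4
    rwa [integral_add hint12 hDint, integral_add hint1 hint4,
      integral_const_mul, integral_const_mul] at hsum
  -- inequality : C*J ≤ D
  have hCJ : C * (∫ x, gJ x) ≤ ∫ x, gD x := by
    rw [← integral_const_mul]
    apply integral_mono (hJint.const_mul C) hDint
    intro x
    by_cases hx : ρ x ≠ 0
    · have hρpos : 0 < ρ x := lt_of_le_of_ne (hρ0 x) (Ne.symm hx)
      have hstep := hΔ x hx
      have hnn : (0:ℝ) ≤ ρ x ^ (α-3) * (φ x ^ 2 * Vpow u τ x) :=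
        mul_nonneg (Real.rpow_nonneg (hρ0 x) _)
          (mul_nonneg (sq_nonneg _) (vpow_pos u _ x).le)
      have h2 := mul_le_mul_of_nonneg_left hstep hnn
      simp only [hgJ, hgD]
      have hkey : C * (ρ x ^ (α-4) * (φ x ^ 2 * Vpow u (τ+lam-mu) x))
          = ρ x ^ (α-3) * (φ x ^ 2 * Vpow u τ x) * (C / ρ x * Vpow u (lam-mu) x) := by
        rw [show α-3 = (α-4)+1 from by ring, Real.rpow_add_one hx,
          show τ+lam-mu = τ+(lam-mu) from by ring, ← vpow_mul]
        field_simp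
      calc C * (ρ x ^ (α-4) * (φ x ^ 2 * Vpow u (τ+lam-mu) x))
          = ρ x ^ (α-3) * (φ x ^ 2 * Vpow u τ x) * (C / ρ x * Vpow u (lam-mu) x) := hkey
        _ ≤ ρ x ^ (α-3) * (φ x ^ 2 * Vpow u τ x) * lapD lam mu u ρ x := h2
        _ = ρ x ^ (α-3) * (φ x ^ 2 * Vpow u τ x * lapD lam mu u ρ x) := by ring
    · push_neg at hx
      have hxt : x ∉ tsupport φ := fun hmem => (hφs hmem) hx
      simp [hgJ, hgD, hφ0 x hxt]
  -- pointwise Cauchy-Schwarz/Young inequalities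
  have pw4 : ∀ x, -gT x ≤ (1/β) * gI x + (β/4) * gJ x := by
    intro x
    by_cases hxt : x ∈ tsupport φ
    · have hx : ρ x ≠ 0 := hφs hxt
      have hρpos : 0 < ρ x := lt_of_le_of_ne (hρ0 x) (Ne.symm hx)
      obtain ⟨p, hp⟩ : ∃ p, ρ x ^ ((α-2)/2) = p := ⟨_, rfl⟩
      obtain ⟨q, hq⟩ : ∃ q, ρ x ^ ((α-4)/2) = q := ⟨_, rfl⟩
      obtain ⟨a, ha⟩ : ∃ a, ‖gradD lam mu u φ x‖ = a := ⟨_, rfl⟩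
      obtain ⟨W, hW⟩ : ∃ W, Vpow u (τ+lam-mu) x = W := ⟨_, rfl⟩
      obtain ⟨Vc, hVcx⟩ : ∃ v, Vpow u (τ+mu-lam) x = v := ⟨_, rfl⟩
      obtain ⟨V2, hV2x⟩ : ∃ v, Vpow u (lam-mu) x = v := ⟨_, rfl⟩
      have hppos : 0 < p := hp ▸ Real.rpow_pos_of_pos hρpos _
      have hqpos : 0 < q := hq ▸ Real.rpow_pos_of_pos hρpos _
      have ha0 : 0 ≤ a := ha ▸ norm_nonneg _
      have hW0 : 0 < W := hW ▸ vpow_pos u _ x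
      have hVc0 : 0 < Vc := hVcx ▸ vpow_pos u _ x
      have hV20 : 0 < V2 := hV2x ▸ vpow_pos u _ x
      have hpp : ρ x ^ (α-2) = p * p := by
        rw [← hp, ← Real.rpow_add hρpos]; congr 1; ring
      have hqq : ρ x ^ (α-4) = q * q := by
        rw [← hq, ← Real.rpow_add hρpos]; congr 1; ring
      have hpq : ρ x ^ (α-3) = p * q := by
        rw [← hp, ← hq, ← Real.rpow_add hρpos]; congr 1; ring
      have hVW : Vc * (V2 * V2) = W := by
        rw [← hVcx, ← hV2x, ← hW, ← mul_assoc, vpow_mul, vpow_mul,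
          show τ + mu - lam + (lam - mu) + (lam - mu) = τ+lam-mu from by ring]
      have hnφ : ‖gradient φ x‖ = V2 * a := by
        rw [← ha, ← hV2x, gradD, norm_smul, Real.norm_eq_abs,
          abs_of_pos (vpow_pos u _ x), ← mul_assoc, vpow_mul,
          show lam-mu+(mu-lam) = 0 from by ring]
        simp [Vpow]
      have hib : |(inner ℝ (gradient ρ x) (gradient φ x) : ℝ)| ≤ V2 * (V2 * a) := by
        calc |(inner ℝ (gradient ρ x) (gradient φ x) : ℝ)|
            ≤ ‖gradient ρ x‖ * ‖gradient φ x‖ := abs_real_inner_le_norm _ _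
          _ = V2 * (V2 * a) := by rw [hnr x hx, hnφ, hV2x]
      have habs : -gT x ≤ p * q * (|φ x| * W * a) := by
        calc -gT x ≤ |gT x| := neg_le_abs _
          _ = ρ x ^ (α-3) * (|φ x| * Vc *
              |(inner ℝ (gradient ρ x) (gradient φ x) : ℝ)|) := by
              simp only [hgT]
              rw [abs_mul, abs_of_nonneg (Real.rpow_nonneg (hρ0 x) _), abs_mul, abs_mul,
                abs_of_pos (vpow_pos u (τ+mu-lam) x), hVcx]
          _ ≤ ρ x ^ (α-3) * (|φ x| * Vc * (V2 * (V2 * a))) := by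
              apply mul_le_mul_of_nonneg_left _ (Real.rpow_nonneg (hρ0 x) _)
              exact mul_le_mul_of_nonneg_left hib (mul_nonneg (abs_nonneg _) hVc0.le)
          _ = p * q * (|φ x| * W * a) := by rw [hpq, ← hVW]; ring
      have hfin : p * q * (|φ x| * W * a) ≤ (1/β) * (p * p * (a^2 * W))
          + (β/4) * (q * q * (φ x ^2 * W)) := by
        have h1 : 4*β*(p * q * (|φ x| * W * a))
            ≤ 4*p^2*a^2*W + β^2*q^2*(φ x)^2*W := by
          have expand : 4*p^2*a^2*W + β^2*q^2*(φ x)^2*W - 4*β*(p * q * (|φ x| * W * a))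
              = W*(2*(p*a) - β*(q * |φ x|))^2 := by
            rw [← sq_abs (φ x)]; ring
          have hkey : 0 ≤ W*(2*(p*a) - β*(q * |φ x|))^2 :=
            mul_nonneg hW0.le (sq_nonneg _)
          linarith [expand, hkey]
        have h2 : 4*p^2*a^2*W + β^2*q^2*(φ x)^2*W
            = 4*β*((1/β) * (p * p * (a^2 * W)) + (β/4) * (q * q * (φ x ^2 * W))) := by
          field_simp
        exact le_of_mul_le_mul_left (h1.trans_eq h2) (by linarith : (0:ℝ) < 4*β)
      have hgIx : gI x = p * p * (a^2 * W) := by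
        simp only [hgI]; rw [hpp, ha, hW]
      have hgJx : gJ x = q * q * (φ x^2 * W) := by
        simp only [hgJ]; rw [hqq, hW]
      rw [hgIx, hgJx]
      linarith [habs, hfin]
    · have h0 : gT x = 0 := by simp [hgT, hφ0 x hxt]
      rw [h0, neg_zero]
      have h1 : 0 ≤ (1/β) * gI x := mul_nonneg (one_div_nonneg.mpr hβ.le) (hgI0 x)
      have h2 : 0 ≤ (β/4) * gJ x := mul_nonneg (by linarith) (hgJ0 x)
      linarith
  have pw5 : ∀ x, -gA x ≤ (ε/2) * gL x + (1/(2*ε)) * gJ x := by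
    intro x
    by_cases hxt : x ∈ tsupport φ
    · have hx : ρ x ≠ 0 := hφs hxt
      have hρpos : 0 < ρ x := lt_of_le_of_ne (hρ0 x) (Ne.symm hx)
      obtain ⟨p, hp⟩ : ∃ p, ρ x ^ (α/2) = p := ⟨_, rfl⟩
      obtain ⟨q, hq⟩ : ∃ q, ρ x ^ ((α-4)/2) = q := ⟨_, rfl⟩
      obtain ⟨d, hd⟩ : ∃ d, lapD lam mu u φ x = d := ⟨_, rfl⟩
      obtain ⟨W1, hW1⟩ : ∃ v, Vpow u (τ+mu-lam) x = v := ⟨_, rfl⟩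
      obtain ⟨W2, hW2⟩ : ∃ v, Vpow u (τ+lam-mu) x = v := ⟨_, rfl⟩
      obtain ⟨Vt, hVt⟩ : ∃ v, Vpow u τ x = v := ⟨_, rfl⟩
      have hppos : 0 < p := hp ▸ Real.rpow_pos_of_pos hρpos _
      have hqpos : 0 < q := hq ▸ Real.rpow_pos_of_pos hρpos _
      have hW10 : 0 < W1 := hW1 ▸ vpow_pos u _ x
      have hW20 : 0 < W2 := hW2 ▸ vpow_pos u _ x
      have hVt0 : 0 < Vt := hVt ▸ vpow_pos u _ x
      have hpp : ρ x ^ α = p * p := by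
        rw [← hp, ← Real.rpow_add hρpos]; congr 1; ring
      have hqq : ρ x ^ (α-4) = q * q := by
        rw [← hq, ← Real.rpow_add hρpos]; congr 1; ring
      have hpq : ρ x ^ (α-2) = p * q := by
        rw [← hp, ← hq, ← Real.rpow_add hρpos]; congr 1; ring
      have hVsq : Vt * Vt = W1 * W2 := by
        rw [← hVt, ← hW1, ← hW2, vpow_mul, vpow_mul,
          show τ + mu - lam + (τ+lam-mu) = τ + τ from by ring]
      have habs : -gA x ≤ p * q * (|φ x| * Vt * |d|) := by
        calc -gA x ≤ |gA x| := neg_le_abs _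
          _ = ρ x ^ (α-2) * (|φ x| * Vt * |d|) := by
              simp only [hgA]
              rw [abs_mul, abs_of_nonneg (Real.rpow_nonneg (hρ0 x) _), abs_mul, abs_mul,
                abs_of_pos (vpow_pos u τ x), hVt, hd]
          _ = p * q * (|φ x| * Vt * |d|) := by rw [hpq]
      have hfin : p * q * (|φ x| * Vt * |d|) ≤ (ε/2) * (p * p * (d^2 * W1))
          + (1/(2*ε)) * (q * q * (φ x^2 * W2)) := by
        have h1 : 2*ε*W1*(p * q * (|φ x| * Vt * |d|))
            ≤ ε^2*p^2*d^2*W1^2 + q^2*(φ x)^2*(W1*W2) := by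
          have expand : ε^2*p^2*d^2*W1^2 + q^2*(φ x)^2*(W1*W2)
                - 2*ε*W1*(p * q * (|φ x| * Vt * |d|))
              = (ε*(p*|d|)*W1 - q * |φ x| * Vt)^2 + q^2*(φ x)^2*(W1*W2 - Vt*Vt) := by
            rw [← sq_abs (φ x), ← sq_abs d]; ring
          have hz : q^2*(φ x)^2*(W1*W2 - Vt*Vt) = 0 := by rw [hVsq]; ring
          have hkey : 0 ≤ (ε*(p*|d|)*W1 - q * |φ x| * Vt)^2 := sq_nonneg _
          linarith [expand, hz, hkey]
        have h2 : ε^2*p^2*d^2*W1^2 + q^2*(φ x)^2*(W1*W2)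
            = 2*ε*W1*((ε/2) * (p * p * (d^2 * W1)) + (1/(2*ε)) * (q * q * (φ x^2 * W2))) := by
          field_simp
        exact le_of_mul_le_mul_left (h1.trans_eq h2)
          (mul_pos (by linarith : (0:ℝ) < 2*ε) hW10)
      have hgLx : gL x = p * p * (d^2 * W1) := by
        simp only [hgL]; rw [hpp, hd, hW1]
      have hgJx : gJ x = q * q * (φ x^2 * W2) := by
        simp only [hgJ]; rw [hqq, hW2]
      rw [hgLx, hgJx]
      linarith [habs, hfin]
    · have h0 : gA x = 0 := by simp [hgA, hφ0 x hxt]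
      rw [h0, neg_zero]
      have h1 : 0 ≤ (ε/2) * gL x := mul_nonneg (by linarith) (hgL0 x)
      have h2 : 0 ≤ (1/(2*ε)) * gJ x := mul_nonneg (one_div_nonneg.mpr (by linarith)) (hgJ0 x)
      linarith
  -- integrated versions
  have hT4 : -(∫ x, gT x) ≤ (1/β) * (∫ x, gI x) + (β/4) * (∫ x, gJ x) := by
    have hni : Integrable (fun x => -gT x) := hTint.neg
    have hrhs : Integrable (fun x => (1/β) * gI x + (β/4) * gJ x) :=
      (hIint.const_mul (1/β)).add (hJint.const_mul (β/4))
    have hmono := integral_mono hni hrhs (fun x => pw4 x)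
    rwa [integral_neg, integral_add (hIint.const_mul _) (hJint.const_mul _),
      integral_const_mul, integral_const_mul] at hmono
  have hA5 : -(∫ x, gA x) ≤ (ε/2) * (∫ x, gL x) + (1/(2*ε)) * (∫ x, gJ x) := by
    have hni : Integrable (fun x => -gA x) := hAint.neg
    have hrhs : Integrable (fun x => (ε/2) * gL x + (1/(2*ε)) * gJ x) :=
      (hLint.const_mul (ε/2)).add (hJint.const_mul (1/(2*ε)))
    have hmono := integral_mono hni hrhs (fun x => pw5 x)
    rwa [integral_neg, integral_add (hLint.const_mul _) (hJint.const_mul _),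
      integral_const_mul, integral_const_mul] at hmono
  -- final arithmetic
  set IN := ∫ x, gI x with hIN
  set JN := ∫ x, gJ x with hJN
  set LN := ∫ x, gL x with hLN
  set AN := ∫ x, gA x with hAN
  set TN := ∫ x, gT x with hTN
  have hI0 : 0 ≤ IN := integral_nonneg hgI0
  have hJ0 : 0 ≤ JN := integral_nonneg hgJ0
  have hL0 : 0 ≤ LN := integral_nonneg hgL0
  have hT2 : 2 * TN ≤ -β * JN := by
    have hbJ : β * JN = C * JN + (α-3) * JN := by rw [hβdef]; ring
    linarith [e2, hCJ, hbJ]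
  have hJI : β^2 * JN ≤ 4 * IN := by
    have h1 : (β/4) * JN ≤ (1/β) * IN := by linarith [hT4, hT2]
    have h2 := mul_le_mul_of_nonneg_left h1 (by linarith : (0:ℝ) ≤ 4*β)
    calc β^2 * JN = 4*β*((β/4)*JN) := by ring
      _ ≤ 4*β*((1/β)*IN) := h2
      _ = 4*IN := by field_simp
  have hκT : (2-α) * TN ≤ -κ * JN := by
    have h1 := mul_le_mul_of_nonneg_left hT2 (by linarith : (0:ℝ) ≤ (2-α)/2)
    calc (2-α) * TN = ((2-α)/2) * (2*TN) := by ring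
      _ ≤ ((2-α)/2) * (-β*JN) := h1
      _ = -κ * JN := by rw [hκdef]; ring
  have hεinv : 1/(2*ε) = (β^2+4*κ)/8 := by
    have h2ε : 2*ε = 8/(β^2+4*κ) := by rw [hεdef]; ring
    rw [h2ε, one_div_div]
  have hIe : IN ≤ (ε/2) * LN + ((β^2-4*κ)/8) * JN := by
    have h1 : IN = -AN + (2-α) * TN := by linarith [e1]
    have h2 : IN ≤ (ε/2) * LN + (1/(2*ε)) * JN + (-κ * JN) := by linarith [hA5, hκT]
    rw [hεinv] at h2
    linarith
  have hm : (0:ℝ) ≤ (β^2-4*κ)/8 := by linarith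
  have hJle : JN ≤ 4*IN/β^2 := by
    rw [le_div_iff₀ (pow_pos hβ 2)]
    linarith [hJI]
  have hIe2 : IN ≤ (ε/2) * LN + ((β^2-4*κ)/8) * (4*IN/β^2) := by
    have := mul_le_mul_of_nonneg_left hJle hm
    linarith [hIe]
  set P := β^2 + 4*κ with hPdef
  clear_value P
  have hPpos : 0 < P := by rw [hPdef]; nlinarith [sq_nonneg β, hκ]
  have hfin : (P/(2*β^2)) * IN ≤ (2/P) * LN := by
    have hε2 : ε/2 = 2/P := by rw [hεdef, hPdef]; ring
    rw [hε2] at hIe2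
    have hβ2 : (0:ℝ) < β^2 := by positivity
    have : ((β^2-4*κ)/8) * (4*IN/β^2) = ((β^2-4*κ)/(2*β^2)) * IN := by
      field_simp; ring
    rw [this] at hIe2
    have hco : (P/(2*β^2)) * IN = IN - ((β^2-4*κ)/(2*β^2)) * IN := by
      rw [hPdef]; field_simp; ring
    linarith [hIe2, hco.le, hco.ge]
  have hmain : (P^2/(4*β^2)) * IN ≤ LN := by
    have h2 := mul_le_mul_of_nonneg_left hfin (by positivity : (0:ℝ) ≤ P/2)
    have hPne : P ≠ 0 := ne_of_gt hPpos
    have hl : (P/2) * ((P/(2*β^2)) * IN) = (P^2/(4*β^2)) * IN := by ring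
    have hr : (P/2) * ((2/P) * LN) = LN := by field_simp
    linarith [h2, hl.le, hl.ge, hr.le, hr.ge]
  have hfactor : P = β * (C-α+1) := by rw [hPdef, hκdef, hβdef]; ring
  have hcoef : P^2/(4*β^2) = (C-α+1)^2/4 := by
    rw [hfactor]
    have hβne : β ≠ 0 := ne_of_gt hβ
    field_simp
  rw [hcoef] at hmain
  -- rewrite the goal in terms of gL and gI
  have hgoalL : (∫ x, ρ x ^ α * (lapD lam mu u φ x)^2 * Vpow u (τ+mu-lam) x) = LN := by
    rw [hLN]
    apply integral_congr_ae (ae_of_all _ _)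
    intro x
    simp only [hgL]; ring
  have hgoalI : (∫ x, ρ x ^ (α-2) * ‖gradD lam mu u φ x‖^2 * Vpow u (τ+lam-mu) x) = IN := by
    rw [hIN]
    apply integral_congr_ae (ae_of_all _ _)
    intro x
    simp only [hgI]; ring
  rw [ge_iff_le, hgoalL, hgoalI]
  exact hmain
end
end
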